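/- arXiv:1810.12728 — 3 statements merged into one kernel-verified Lean document; each statement's English description precedes it below -/
import Mathlib

section
/- Let K → 𝒜 →ⁱ ℬ →^π 𝒞 → K be a short exact sequence of graded connected bicommutative Hopf algebras over a field K, and let f : 𝒞 → ℬ be a graded K-linear map with π ∘ f = id_𝒞. Then the map f̄ : 𝒜 ⊗ 𝒞 → ℬ, a ⊗ c ↦ a·f(c), is an isomorphism of 𝒜-modules. -/
open TensorProduct

noncomputable section

/-- A bicommutative Hopf algebra structure on a `K`-module `X`, recorded through plain
linear-algebra data (multiplication, unit, comultiplication, counit, antipode) together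
with all the (co)algebra, bialgebra and antipode axioms. -/
structure HopfStr (K : Type*) [Field K] (X : Type*) [AddCommGroup X] [Module K X] where
  mul : X →ₗ[K] X →ₗ[K] X
  one : X
  comul : X →ₗ[K] X ⊗[K] X
  counit : X →ₗ[K] K
  antipode : X →ₗ[K] X
  mul_assoc' : ∀ x y z : X, mul (mul x y) z = mul x (mul y z)
  mul_comm' : ∀ x y : X, mul x y = mul y x
  one_mul' : ∀ x : X, mul one x = x
  coassoc : (TensorProduct.assoc K X X X).toLinearMap.comp
        ((TensorProduct.map comul LinearMap.id).comp comul)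
      = (TensorProduct.map LinearMap.id comul).comp comul
  cocomm : (TensorProduct.comm K X X).toLinearMap.comp comul = comul
  counit_comul : (TensorProduct.lid K X).toLinearMap.comp
      ((TensorProduct.map counit LinearMap.id).comp comul) = LinearMap.id
  comul_one : comul one = one ⊗ₜ[K] one
  counit_one : counit one = 1
  comul_mul : ∀ x y : X, comul (mul x y)
      = TensorProduct.homTensorHomMap (RingHom.id K) X X X X
          (TensorProduct.map mul mul (comul x)) (comul y)
  counit_mul : ∀ x y : X, counit (mul x y) = counit x * counit y
  antipode_mul : ∀ x : X,
      TensorProduct.lift mul (TensorProduct.map antipode LinearMap.id (comul x))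
        = counit x • one

/-- A graded (by `ℕ`) bicommutative Hopf algebra structure: a Hopf structure together with
a grading for which all the structure maps are graded. -/
structure GradedHopfStr (K : Type*) [Field K] (X : Type*) [AddCommGroup X] [Module K X]
    extends HopfStr K X where
  grading : ℕ → Submodule K X
  is_internal : DirectSum.IsInternal grading
  one_mem : one ∈ grading 0
  mul_graded : ∀ m n : ℕ, ∀ x ∈ grading m, ∀ y ∈ grading n, mul x y ∈ grading (m + n)
  comul_graded : ∀ n : ℕ, ∀ x ∈ grading n,
      comul x ∈ ⨆ p : {p : ℕ × ℕ // p.1 + p.2 = n},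
        LinearMap.range (TensorProduct.map (grading p.1.1).subtype (grading p.1.2).subtype)
  counit_graded : ∀ n : ℕ, 0 < n → ∀ x ∈ grading n, counit x = 0
  antipode_graded : ∀ n : ℕ, ∀ x ∈ grading n, antipode x ∈ grading n

/-- A graded Hopf algebra is connected if its degree-`0` part is spanned by the unit. -/
def GradedHopfStr.Connected {K : Type*} [Field K] {X : Type*} [AddCommGroup X] [Module K X]
    (S : GradedHopfStr K X) : Prop :=
  S.grading 0 = Submodule.span K {S.one}

/-- A linear map is a homomorphism of Hopf algebras if it commutes with all structure maps. -/
structure IsHopfHom {K : Type*} [Field K] {X Y : Type*} [AddCommGroup X] [Module K X]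
    [AddCommGroup Y] [Module K Y] (SX : HopfStr K X) (SY : HopfStr K Y)
    (f : X →ₗ[K] Y) : Prop where
  map_mul : ∀ x y : X, f (SX.mul x y) = SY.mul (f x) (f y)
  map_one : f SX.one = SY.one
  map_comul : SY.comul.comp f = (TensorProduct.map f f).comp SX.comul
  map_counit : SY.counit.comp f = SX.counit

/-- `K → A → B → C → K` is a short exact sequence of bicommutative Hopf algebras:
`i` and `π` are Hopf homomorphisms, `i` is injective, `π` is surjective, the image of `i`
is the (Hopf) kernel `{b | (id ⊗ π)(Δ b) = b ⊗ 1}` of `π`, and the kernel of `π` is the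
ideal `A₊B` generated by the image under `i` of the augmentation ideal of `A`. -/
def IsHopfSES {K : Type*} [Field K] {A B C : Type*}
    [AddCommGroup A] [Module K A] [AddCommGroup B] [Module K B] [AddCommGroup C] [Module K C]
    (SA : HopfStr K A) (SB : HopfStr K B) (SC : HopfStr K C)
    (i : A →ₗ[K] B) (π : B →ₗ[K] C) : Prop :=
  IsHopfHom SA SB i ∧ IsHopfHom SB SC π ∧
  Function.Injective i ∧ Function.Surjective π ∧
  (LinearMap.range i
    = LinearMap.ker ((TensorProduct.map LinearMap.id π).comp SB.comul
        - (TensorProduct.mk K B C).flip SC.one)) ∧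
  (LinearMap.ker π
    = Submodule.span K {y : B | ∃ a ∈ LinearMap.ker SA.counit, ∃ b : B, y = SB.mul (i a) b})

/-!
Let `ρ = (id ⊗ π) ∘ Δ : ℬ → ℬ ⊗ 𝒞` be the coaction of `𝒞` on `ℬ`.

Surjectivity: by induction on the degree `q`, for `b ∈ ℬ_q` the element `b - f(π b)` lies in
`ker π = 𝒜₊ℬ`; the degree-`q` part of `i(a)·y` with `a ∈ 𝒜₊` is a sum of products `i(a_p)·y_m`
with `p > 0` (connectedness of `𝒜`), so `m < q` and `y_m` lies in the image of `f̄` by induction.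

Injectivity: let `r` be a linear left inverse of `i`. Since `ρ(i a) = i a ⊗ 1` and, `ℬ` being
connected, `ρ(f c) ≡ 1 ⊗ c` modulo `ℬ ⊗ 𝒞_{<deg c}`, the map `(r ⊗ id) ∘ ρ ∘ f̄` is the identity
modulo terms of lower `𝒞`-degree. It is therefore injective, and so is `f̄`.
-/

theorem LinearMap.injective_of_sub_mem_of_filtration {R M : Type*} [Ring R] [AddCommGroup M]
    [Module R M] (F : ℕ → Submodule R M) (hF₀ : F 0 = ⊥) (hF : ∀ x, ∃ t, x ∈ F t)
    (g : M →ₗ[R] M) (hg : ∀ t, ∀ x ∈ F (t + 1), g x - x ∈ F t) : Function.Injective g := by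
  refine (injective_iff_map_eq_zero g).mpr fun x hx => ?_
  obtain ⟨t, hxt⟩ := hF x
  induction t with
  | zero => simpa [hF₀] using hxt
  | succ t ih => exact ih (by simpa [hx] using hg t x hxt)

section TensorFiltration

variable {R M N P C : Type*} [CommRing R] [AddCommGroup M] [Module R M] [AddCommGroup N]
  [Module R N] [AddCommGroup P] [Module R P] [AddCommGroup C] [Module R C]

theorem TensorProduct.range_le_of_tmul_mem {f : M ⊗[R] N →ₗ[R] P} {S : Submodule R P}
    (h : ∀ m n, f (m ⊗ₜ n) ∈ S) : LinearMap.range f ≤ S := by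
  rintro _ ⟨z, rfl⟩
  induction z using TensorProduct.induction_on with
  | zero => simp
  | tmul m n => exact h m n
  | add x y hx hy => rw [map_add]; exact add_mem hx hy

def degreeLT (𝒢 : ℕ → Submodule R C) (t : ℕ) : Submodule R C := ⨆ (s) (_ : s < t), 𝒢 s

def tensorDegreeLT (M : Type*) [AddCommGroup M] [Module R M] (𝒢 : ℕ → Submodule R C)
    (t : ℕ) : Submodule R (M ⊗[R] C) :=
  LinearMap.range ((degreeLT 𝒢 t).subtype.lTensor M)

variable {𝒢 : ℕ → Submodule R C}

theorem degreeLT_zero : degreeLT 𝒢 0 = ⊥ := by simp [degreeLT]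

theorem degreeLT_mono : Monotone (degreeLT 𝒢) :=
  fun _ _ h => biSup_mono fun _ hs => lt_of_lt_of_le hs h

theorem grading_le_degreeLT {s t : ℕ} (h : s < t) : 𝒢 s ≤ degreeLT 𝒢 t :=
  le_biSup 𝒢 h

theorem iSup_degreeLT (h : ⨆ s, 𝒢 s = ⊤) : ⨆ t, degreeLT 𝒢 t = ⊤ :=
  eq_top_iff.mpr <| h ▸ iSup_le fun s => (grading_le_degreeLT s.lt_succ_self).trans (le_iSup _ _)

theorem tmul_mem_tensorDegreeLT {t : ℕ} (m : M) {c : C} (hc : c ∈ degreeLT 𝒢 t) :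
    m ⊗ₜ c ∈ tensorDegreeLT M 𝒢 t :=
  ⟨m ⊗ₜ ⟨c, hc⟩, rfl⟩

theorem tensorDegreeLT_zero : tensorDegreeLT M 𝒢 0 = ⊥ :=
  eq_bot_iff.mpr <| TensorProduct.range_le_of_tmul_mem fun _ c => by
    simp [show (c : C) = 0 by simpa [degreeLT_zero] using c.2]

theorem tensorDegreeLT_mono : Monotone (tensorDegreeLT M 𝒢) :=
  fun _ _ h => TensorProduct.range_le_of_tmul_mem fun m c =>
    tmul_mem_tensorDegreeLT m (degreeLT_mono h c.2)

theorem rTensor_mem_tensorDegreeLT (φ : M →ₗ[R] N) {t : ℕ} {x : M ⊗[R] C}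
    (hx : x ∈ tensorDegreeLT M 𝒢 t) : φ.rTensor C x ∈ tensorDegreeLT N 𝒢 t := by
  obtain ⟨z, rfl⟩ := hx
  exact ⟨φ.rTensor _ z, by rw [← LinearMap.comp_apply, ← LinearMap.comp_apply,
    LinearMap.lTensor_comp_rTensor, LinearMap.rTensor_comp_lTensor]⟩

theorem exists_mem_tensorDegreeLT (h : ⨆ s, 𝒢 s = ⊤) (x : M ⊗[R] C) :
    ∃ t, x ∈ tensorDegreeLT M 𝒢 t := by
  induction x using TensorProduct.induction_on with
  | zero => exact ⟨0, zero_mem _⟩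
  | tmul m c =>
    have hdir : Directed (· ≤ ·) (degreeLT 𝒢) := degreeLT_mono.directed_le
    obtain ⟨t, ht⟩ := (Submodule.mem_iSup_of_directed _ hdir).mp
      (iSup_degreeLT h ▸ Submodule.mem_top : c ∈ ⨆ t, degreeLT 𝒢 t)
    exact ⟨t, tmul_mem_tensorDegreeLT m ht⟩
  | add x y hx hy =>
    obtain ⟨t, hx⟩ := hx
    obtain ⟨t', hy⟩ := hy
    exact ⟨max t t', add_mem (tensorDegreeLT_mono (le_max_left t t') hx)
      (tensorDegreeLT_mono (le_max_right t t') hy)⟩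

theorem injective_of_tmul_sub_mem_tensorDegreeLT (h : ⨆ s, 𝒢 s = ⊤)
    (g : M ⊗[R] C →ₗ[R] M ⊗[R] C)
    (hg : ∀ m t, ∀ c ∈ 𝒢 t, g (m ⊗ₜ c) - m ⊗ₜ c ∈ tensorDegreeLT M 𝒢 t) :
    Function.Injective g := by
  refine LinearMap.injective_of_sub_mem_of_filtration _ tensorDegreeLT_zero
    (exists_mem_tensorDegreeLT h) g fun t => ?_
  suffices tensorDegreeLT M 𝒢 (t + 1) ≤ (tensorDegreeLT M 𝒢 t).comap (g - LinearMap.id) from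
    fun x hx => this hx
  refine TensorProduct.range_le_of_tmul_mem fun m c => ?_
  suffices degreeLT 𝒢 (t + 1) ≤
      (tensorDegreeLT M 𝒢 t).comap ((g - LinearMap.id) ∘ₗ TensorProduct.mk R M C m) from this c.2
  refine iSup₂_le fun s hs c hc => ?_
  exact tensorDegreeLT_mono (Nat.lt_succ_iff.mp hs) (hg m s c hc)

theorem sub_tmul_counit_mem_tensorDegreeLT (ε : M →ₗ[R] R) {u : M} (hu : ε u = 1) {t : ℕ}
    {z : M ⊗[R] C} {c : C} (h : z - u ⊗ₜ c ∈ tensorDegreeLT M 𝒢 t) :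
    z - u ⊗ₜ TensorProduct.lid R C (ε.rTensor C z) ∈ tensorDegreeLT M 𝒢 t := by
  set L := (TensorProduct.lid R C).toLinearMap ∘ₗ ε.rTensor C
  have hL : ∀ w ∈ tensorDegreeLT M 𝒢 t, L w ∈ degreeLT 𝒢 t := by
    rintro _ ⟨w, rfl⟩
    induction w using TensorProduct.induction_on with
    | zero => simp
    | tmul m c => simpa [L] using Submodule.smul_mem _ (ε m) c.2
    | add x y hx hy => rw [map_add, map_add]; exact add_mem hx hy
  have hz : L z = c + L (z - u ⊗ₜ c) := by simp [L, hu]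
  have : z - u ⊗ₜ L z = (z - u ⊗ₜ c) - u ⊗ₜ L (z - u ⊗ₜ c) := by
    rw [hz, TensorProduct.tmul_add]; abel
  exact this ▸ sub_mem h (tmul_mem_tensorDegreeLT u (hL _ h))

end TensorFiltration

theorem DirectSum.IsInternal.exists_proj {R ι M : Type*} [Semiring R] [DecidableEq ι]
    [AddCommMonoid M] [Module R M] {𝒢 : ι → Submodule R M} (h : DirectSum.IsInternal 𝒢)
    (q : ι) : ∃ P : M →ₗ[R] M, (∀ x ∈ 𝒢 q, P x = x) ∧ ∀ m ≠ q, ∀ x ∈ 𝒢 m, P x = 0 := by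
  let := h.chooseDecomposition
  refine ⟨(𝒢 q).subtype ∘ₗ DirectSum.component R ι (fun i => 𝒢 i) q ∘ₗ
    (DirectSum.decomposeLinearEquiv 𝒢).toLinearMap, fun x hx => ?_, fun m hm x hx => ?_⟩
  · exact DirectSum.decompose_of_mem_same 𝒢 hx
  · exact DirectSum.decompose_of_mem_ne 𝒢 hx hm

namespace HopfStr

variable {K A B C : Type*} [Field K] [AddCommGroup A] [Module K A] [AddCommGroup B] [Module K B]
  [AddCommGroup C] [Module K C]

theorem mul_one (S : HopfStr K B) (x : B) : S.mul x S.one = x := by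
  rw [S.mul_comm', S.one_mul']

def coaction (SB : HopfStr K B) (π : B →ₗ[K] C) : B →ₗ[K] B ⊗[K] C := π.lTensor B ∘ₗ SB.comul

theorem lid_rTensor_counit_coaction (SB : HopfStr K B) (π : B →ₗ[K] C) (b : B) :
    TensorProduct.lid K C (SB.counit.rTensor C (SB.coaction π b)) = π b := by
  have hcomm : (TensorProduct.lid K C).toLinearMap ∘ₗ SB.counit.rTensor C ∘ₗ π.lTensor B
      = π ∘ₗ (TensorProduct.lid K B).toLinearMap ∘ₗ SB.counit.rTensor B :=
    TensorProduct.ext' fun x y => by simp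
  have h := LinearMap.congr_fun hcomm (SB.comul b)
  have hε := LinearMap.congr_fun SB.counit_comul b
  simp only [LinearMap.comp_apply, LinearEquiv.coe_coe] at h hε
  exact h.trans (congrArg π hε)

theorem coaction_mul_of_coaction_eq (SB : HopfStr K B) (SC : HopfStr K C) {π : B →ₗ[K] C}
    (hπ : ∀ x y, π (SB.mul x y) = SC.mul (π x) (π y)) {x : B}
    (hx : SB.coaction π x = x ⊗ₜ SC.one) (y : B) :
    SB.coaction π (SB.mul x y) = (SB.mul x).rTensor C (SB.coaction π y) := by
  have hmul : ∀ u v : B ⊗[K] B, π.lTensor B (TensorProduct.homTensorHomMap (RingHom.id K) B B B B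
      (TensorProduct.map SB.mul SB.mul u) v) = TensorProduct.homTensorHomMap (RingHom.id K)
        B C B C (TensorProduct.map SB.mul SC.mul (π.lTensor B u)) (π.lTensor B v) := by
    intro u v
    induction u using TensorProduct.induction_on with
    | zero => simp
    | add u u' hu hu' => simp only [map_add, LinearMap.add_apply, hu, hu']
    | tmul b₁ b₂ =>
      induction v using TensorProduct.induction_on with
      | zero => simp
      | add v v' hv hv' => simp only [map_add, hv, hv']
      | tmul b₃ b₄ => simp [hπ]
  have hone : SC.mul SC.one = LinearMap.id := LinearMap.ext SC.one_mul'
  have hx' : π.lTensor B (SB.comul x) = x ⊗ₜ SC.one := hx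
  simp only [coaction, LinearMap.comp_apply]
  rw [SB.comul_mul, hmul, hx']
  simp [hone, LinearMap.rTensor]

def productMap (SB : HopfStr K B) (i : A →ₗ[K] B) (f : C →ₗ[K] B) : A ⊗[K] C →ₗ[K] B :=
  TensorProduct.lift ((SB.mul ∘ₗ i).compl₂ f)

@[simp]
theorem productMap_tmul (SB : HopfStr K B) (i : A →ₗ[K] B) (f : C →ₗ[K] B) (a : A) (c : C) :
    SB.productMap i f (a ⊗ₜ c) = SB.mul (i a) (f c) := rfl

theorem productMap_mul_tmul (SA : HopfStr K A) (SB : HopfStr K B) {i : A →ₗ[K] B}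
    (hi : ∀ x y, i (SA.mul x y) = SB.mul (i x) (i y)) (f : C →ₗ[K] B) (a a' : A) (c : C) :
    SB.productMap i f (SA.mul a a' ⊗ₜ c) = SB.mul (i a) (SB.productMap i f (a' ⊗ₜ c)) := by
  simp [hi, SB.mul_assoc']

theorem mul_mem_range_productMap (SA : HopfStr K A) (SB : HopfStr K B) {i : A →ₗ[K] B}
    (hi : ∀ x y, i (SA.mul x y) = SB.mul (i x) (i y)) (f : C →ₗ[K] B) (a : A) {x : B}
    (hx : x ∈ LinearMap.range (SB.productMap i f)) :
    SB.mul (i a) x ∈ LinearMap.range (SB.productMap i f) := by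
  obtain ⟨z, rfl⟩ := hx
  refine ⟨(SA.mul a).rTensor C z, ?_⟩
  have : SB.productMap i f ∘ₗ (SA.mul a).rTensor C = SB.mul (i a) ∘ₗ SB.productMap i f :=
    TensorProduct.ext' fun a' c => by simpa using productMap_mul_tmul SA SB hi f a a' c
  exact LinearMap.congr_fun this z

end HopfStr

namespace GradedHopfStr

variable {K A B C : Type*} [Field K] [AddCommGroup A] [Module K A] [AddCommGroup B] [Module K B]
  [AddCommGroup C] [Module K C]

theorem ker_counit_le_iSup_grading (S : GradedHopfStr K A) (hS : S.Connected) :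
    LinearMap.ker S.counit ≤ ⨆ (p) (_ : p ≠ 0), S.grading p := by
  intro a ha
  have hpos : ⨆ (p) (_ : p ≠ 0), S.grading p ≤ LinearMap.ker S.counit :=
    iSup₂_le fun p hp x hx => S.counit_graded p (Nat.pos_of_ne_zero hp) x hx
  have htop : a ∈ S.grading 0 ⊔ ⨆ (p) (_ : p ≠ 0), S.grading p := by
    rw [← iSup_split_single, S.is_internal.submodule_iSup_eq_top]; trivial
  obtain ⟨a₀, h₀, a₁, h₁, rfl⟩ := Submodule.mem_sup.mp htop
  rw [hS] at h₀
  obtain ⟨μ, rfl⟩ := Submodule.mem_span_singleton.mp h₀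
  have hμ : μ = 0 := by simpa [S.counit_one, show S.counit a₁ = 0 from hpos h₁] using ha
  simpa [hμ] using h₁

theorem exists_coaction_sub_one_tmul_mem (SB : GradedHopfStr K B) (hB : SB.Connected)
    {𝒞 : ℕ → Submodule K C} {π : B →ₗ[K] C} (hπ : ∀ n, ∀ b ∈ SB.grading n, π b ∈ 𝒞 n)
    {t : ℕ} {b : B} (hb : b ∈ SB.grading t) :
    ∃ c, SB.coaction π b - SB.one ⊗ₜ c ∈ tensorDegreeLT B 𝒞 t := by
  set S := LinearMap.range (TensorProduct.mk K B C SB.one) ⊔ tensorDegreeLT B 𝒞 t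
  suffices SB.coaction π b ∈ S by
    obtain ⟨_, ⟨c, rfl⟩, w, hw, hsum⟩ := Submodule.mem_sup.mp this
    exact ⟨c, by simpa [← hsum] using hw⟩
  -- the summand `B_p ⊗ B_q` of `Δ b` with `q = t` has `p = 0`, and `B_0 = K ∙ 1`
  refine SB.comul_graded t b hb |> (iSup_le fun p => ?_ : _ ≤ S.comap (π.lTensor B))
  obtain ⟨⟨p₁, p₂⟩, hp⟩ := p
  refine TensorProduct.range_le_of_tmul_mem fun x y => ?_
  simp only [Submodule.mem_comap, TensorProduct.map_tmul, LinearMap.lTensor_tmul,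
    Submodule.coe_subtype]
  rcases (show p₂ ≤ t by omega).lt_or_eq with hlt | rfl
  · exact Submodule.mem_sup_right <|
      tmul_mem_tensorDegreeLT _ (grading_le_degreeLT hlt (hπ p₂ y y.2))
  · obtain rfl : p₁ = 0 := by omega
    obtain ⟨μ, hμ⟩ := Submodule.mem_span_singleton.mp (by rw [← hB]; exact x.2)
    exact Submodule.mem_sup_left ⟨μ • π y, by simp [← hμ, TensorProduct.smul_tmul]⟩

theorem coaction_sub_one_tmul_mem (SB : GradedHopfStr K B) (hB : SB.Connected)
    {𝒞 : ℕ → Submodule K C} {π : B →ₗ[K] C} (hπ : ∀ n, ∀ b ∈ SB.grading n, π b ∈ 𝒞 n)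
    {t : ℕ} {b : B} (hb : b ∈ SB.grading t) :
    SB.coaction π b - SB.one ⊗ₜ π b ∈ tensorDegreeLT B 𝒞 t := by
  obtain ⟨c, hc⟩ := exists_coaction_sub_one_tmul_mem SB hB hπ hb
  simpa [HopfStr.lid_rTensor_counit_coaction] using
    sub_tmul_counit_mem_tensorDegreeLT SB.counit SB.counit_one hc

theorem productMap_injective (SB : GradedHopfStr K B) (SC : GradedHopfStr K C)
    (hB : SB.Connected) {i : A →ₗ[K] B} {π : B →ₗ[K] C} (hinj : Function.Injective i)
    (hπ_mul : ∀ x y, π (SB.mul x y) = SC.mul (π x) (π y))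
    (hπ : ∀ n, ∀ b ∈ SB.grading n, π b ∈ SC.grading n)
    (hker : LinearMap.range i ≤
      LinearMap.ker (SB.coaction π - (TensorProduct.mk K B C).flip SC.one))
    {f : C →ₗ[K] B} (hf : ∀ n, ∀ c ∈ SC.grading n, f c ∈ SB.grading n)
    (hsec : ∀ c, π (f c) = c) :
    Function.Injective (SB.productMap i f) := by
  obtain ⟨r, hr⟩ := i.exists_leftInverse_of_injective (LinearMap.ker_eq_bot.mpr hinj)
  have hcoaction (a : A) : SB.coaction π (i a) = i a ⊗ₜ SC.one :=
    sub_eq_zero.mp (hker ⟨a, rfl⟩)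
  refine Function.Injective.of_comp (f := ⇑(r.rTensor C ∘ₗ SB.coaction π)) ?_
  rw [← LinearMap.coe_comp]
  refine injective_of_tmul_sub_mem_tensorDegreeLT SC.is_internal.submodule_iSup_eq_top _
    fun a t c hc => ?_
  have hlead := coaction_sub_one_tmul_mem SB hB hπ (hf t c hc)
  rw [hsec] at hlead
  convert rTensor_mem_tensorDegreeLT (r ∘ₗ SB.mul (i a)) hlead using 1
  simp [HopfStr.coaction_mul_of_coaction_eq _ _ hπ_mul (hcoaction a),
    ← LinearMap.rTensor_comp_apply, HopfStr.mul_one, ← LinearMap.comp_apply r i, hr]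

theorem proj_mul_mem_of_grading_le (SA : GradedHopfStr K A) (SB : GradedHopfStr K B)
    (hA : SA.Connected) {i : A →ₗ[K] B} (hi : ∀ n, ∀ a ∈ SA.grading n, i a ∈ SB.grading n)
    {T : Submodule K B} (hT : ∀ a, ∀ x ∈ T, SB.mul (i a) x ∈ T) {q : ℕ}
    (hq : ∀ m < q, SB.grading m ≤ T)
    {P : B →ₗ[K] B} (hPq : ∀ x ∈ SB.grading q, P x = x)
    (hP : ∀ m ≠ q, ∀ x ∈ SB.grading m, P x = 0) {a : A} (ha : SA.counit a = 0) (y : B) :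
    P (SB.mul (i a) y) ∈ T := by
  have hle : Submodule.map₂ ((SB.mul ∘ₗ i).compr₂ P) (⨆ (p) (_ : p ≠ 0), SA.grading p)
      (⨆ m, SB.grading m) ≤ T := by
    simp only [Submodule.map₂_iSup_left, Submodule.map₂_iSup_right]
    refine iSup_le fun m => iSup₂_le fun p hp => Submodule.map₂_le.mpr fun x hx z hz => ?_
    have hxz := SB.mul_graded p m _ (hi p x hx) z hz
    by_cases h : p + m = q
    · simpa [hPq _ (h ▸ hxz)] using hT x z (hq m (by omega) hz)
    · simp [hP _ h _ hxz]
  refine hle (Submodule.apply_mem_map₂ _ (ker_counit_le_iSup_grading SA hA ha) ?_)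
  rw [SB.is_internal.submodule_iSup_eq_top]
  trivial

theorem productMap_surjective (SA : GradedHopfStr K A) (SB : GradedHopfStr K B)
    (hA : SA.Connected) {𝒞 : ℕ → Submodule K C} {i : A →ₗ[K] B}
    (hi : ∀ n, ∀ a ∈ SA.grading n, i a ∈ SB.grading n)
    (hi_mul : ∀ x y, i (SA.mul x y) = SB.mul (i x) (i y)) (hi_one : i SA.one = SB.one)
    {π : B →ₗ[K] C} (hπ : ∀ n, ∀ b ∈ SB.grading n, π b ∈ 𝒞 n)
    (hker : LinearMap.ker π ≤
      Submodule.span K {y | ∃ a ∈ LinearMap.ker SA.counit, ∃ b, y = SB.mul (i a) b})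
    {f : C →ₗ[K] B} (hf : ∀ n, ∀ c ∈ 𝒞 n, f c ∈ SB.grading n) (hsec : ∀ c, π (f c) = c) :
    Function.Surjective (SB.productMap i f) := by
  set T := LinearMap.range (SB.productMap i f)
  have hT (a : A) : ∀ x ∈ T, SB.mul (i a) x ∈ T :=
    fun _ => HopfStr.mul_mem_range_productMap SA.toHopfStr SB.toHopfStr hi_mul f a
  have hfT (c : C) : f c ∈ T := ⟨SA.one ⊗ₜ c, by simp [hi_one, SB.one_mul']⟩
  have hgrading (q : ℕ) : SB.grading q ≤ T := by
    induction q using Nat.strong_induction_on with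
    | _ q ih =>
      obtain ⟨P, hPq, hP⟩ := SB.is_internal.exists_proj q
      have hkerT : LinearMap.ker π ≤ T.comap P := hker.trans <| Submodule.span_le.mpr <| by
        rintro _ ⟨a, ha, y, rfl⟩
        exact proj_mul_mem_of_grading_le SA SB hA hi hT ih hPq hP ha y
      intro b hb
      have hbq : b - f (π b) ∈ SB.grading q := sub_mem hb (hf q _ (hπ q b hb))
      have hbker : b - f (π b) ∈ LinearMap.ker π := by simp [hsec]
      have hbT : b - f (π b) ∈ T := hPq _ hbq ▸ hkerT hbker
      simpa using add_mem hbT (hfT (π b))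
  rw [← LinearMap.range_eq_top, eq_top_iff, ← SB.is_internal.submodule_iSup_eq_top]
  exact iSup_le hgrading

end GradedHopfStr

theorem stmt1_general
    (K : Type*) [Field K]
    (A B C : Type*)
    [AddCommGroup A] [Module K A] [AddCommGroup B] [Module K B] [AddCommGroup C] [Module K C]
    (SA : GradedHopfStr K A) (SB : GradedHopfStr K B) (SC : GradedHopfStr K C)
    (hA : SA.Connected) (hB : SB.Connected)
    (i : A →ₗ[K] B) (π : B →ₗ[K] C)
    (hi : ∀ n : ℕ, ∀ a ∈ SA.grading n, i a ∈ SB.grading n)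
    (hπ : ∀ n : ℕ, ∀ b ∈ SB.grading n, π b ∈ SC.grading n)
    (hses : IsHopfSES SA.toHopfStr SB.toHopfStr SC.toHopfStr i π)
    (f : C →ₗ[K] B)
    (hf : ∀ n : ℕ, ∀ c ∈ SC.grading n, f c ∈ SB.grading n)
    (hsec : π.comp f = LinearMap.id) :
    -- `f̄ = TensorProduct.lift (a ↦ c ↦ SB.mul (i a) (f c))` is bijective, and it is a
    -- homomorphism of `𝒜`-modules for the action of `𝒜` on `𝒜 ⊗ 𝒞` through the first
    -- factor and on `ℬ` through `i` and multiplication.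
    Function.Bijective
      (TensorProduct.lift (((SB.mul.comp i).compl₂ f) : A →ₗ[K] C →ₗ[K] B))
    ∧ ∀ (a a' : A) (c : C),
        TensorProduct.lift (((SB.mul.comp i).compl₂ f)) ((SA.mul a a') ⊗ₜ[K] c)
          = SB.mul (i a) (TensorProduct.lift (((SB.mul.comp i).compl₂ f)) (a' ⊗ₜ[K] c)) := by
  obtain ⟨hi_hom, hπ_hom, hinj, -, hrange, hker⟩ := hses
  have hsec' (c : C) : π (f c) = c := LinearMap.congr_fun hsec c
  refine ⟨⟨?_, ?_⟩, HopfStr.productMap_mul_tmul SA.toHopfStr SB.toHopfStr hi_hom.map_mul f⟩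
  · exact SB.productMap_injective SC hB hinj hπ_hom.map_mul hπ hrange.le hf hsec'
  · exact GradedHopfStr.productMap_surjective SA SB hA hi hi_hom.map_mul hi_hom.map_one hπ
      hker.le hf hsec'

theorem stmt1
    (K : Type*) [Field K]
    (A B C : Type*)
    [AddCommGroup A] [Module K A] [AddCommGroup B] [Module K B] [AddCommGroup C] [Module K C]
    (SA : GradedHopfStr K A) (SB : GradedHopfStr K B) (SC : GradedHopfStr K C)
    (hA : SA.Connected) (hB : SB.Connected) (hC : SC.Connected)
    (i : A →ₗ[K] B) (π : B →ₗ[K] C)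
    (hi : ∀ n : ℕ, ∀ a ∈ SA.grading n, i a ∈ SB.grading n)
    (hπ : ∀ n : ℕ, ∀ b ∈ SB.grading n, π b ∈ SC.grading n)
    (hses : IsHopfSES SA.toHopfStr SB.toHopfStr SC.toHopfStr i π)
    (f : C →ₗ[K] B)
    (hf : ∀ n : ℕ, ∀ c ∈ SC.grading n, f c ∈ SB.grading n)
    (hsec : π.comp f = LinearMap.id) :
    -- `f̄ = TensorProduct.lift (a ↦ c ↦ SB.mul (i a) (f c))` is bijective, and it is a
    -- homomorphism of `𝒜`-modules for the action of `𝒜` on `𝒜 ⊗ 𝒞` through the first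
    -- factor and on `ℬ` through `i` and multiplication.
    Function.Bijective
      (TensorProduct.lift (((SB.mul.comp i).compl₂ f) : A →ₗ[K] C →ₗ[K] B))
    ∧ ∀ (a a' : A) (c : C),
        TensorProduct.lift (((SB.mul.comp i).compl₂ f)) ((SA.mul a a') ⊗ₜ[K] c)
          = SB.mul (i a) (TensorProduct.lift (((SB.mul.comp i).compl₂ f)) (a' ⊗ₜ[K] c)) :=
  stmt1_general K A B C SA SB SC hA hB i π hi hπ hses f hf hsec
end
end

section
/- Let K → 𝒜 →ⁱ ℬ →^π 𝒞 → K be a short exact sequence of graded connected bicommutative Hopf algebras over a field K. Then for every n ≥ 0 there is an isomorphism 𝒜₊ⁿℬ/𝒜₊ⁿ⁺¹ℬ ≅ (𝒜₊ⁿ/𝒜₊ⁿ⁺¹) ⊗ 𝒞 which depends only on the short exact sequence (it does not depend on a choice of linear splitting of π), and which is natural with respect to morphisms of short exact sequences of such Hopf algebras. -/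
open TensorProduct

noncomputable section

/-- The powers `A₊ⁿ` of the augmentation ideal of a Hopf algebra (`A₊⁰ = A`). -/
def augPow {K : Type*} [Field K] {X : Type*} [AddCommGroup X] [Module K X]
    (S : HopfStr K X) : ℕ → Submodule K X
  | 0 => ⊤
  | n + 1 => Submodule.span K
      {x : X | ∃ a ∈ LinearMap.ker S.counit, ∃ b ∈ augPow S n, x = S.mul a b}

/-- The submodule `𝒜₊ⁿ ℬ` of `ℬ` (for the `𝒜`-module structure on `ℬ` given by `i`). -/
def augPowSmul {K : Type*} [Field K] {A B : Type*} [AddCommGroup A] [Module K A]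
    [AddCommGroup B] [Module K B] (SA : HopfStr K A) (SB : HopfStr K B)
    (i : A →ₗ[K] B) (n : ℕ) : Submodule K B :=
  Submodule.span K {y : B | ∃ a ∈ augPow SA n, ∃ b : B, y = SB.mul (i a) b}

/-!
STATEMENT 2.
For a short exact sequence `K → 𝒜 →ⁱ ℬ →^π 𝒞 → K` of graded connected bicommutative Hopf
algebras over a field `K` and any `n ≥ 0` there is an isomorphism
`𝒜₊ⁿℬ/𝒜₊ⁿ⁺¹ℬ ≅ (𝒜₊ⁿ/𝒜₊ⁿ⁺¹) ⊗ 𝒞` which depends only on the short exact sequence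
(not on a choice of graded linear splitting of `π`), and which is natural with respect
to morphisms of short exact sequences.

This is expressed by:
(1) a graded linear splitting `f` of `π` exists;
(2) for every graded splitting `f`, `a ⊗ c ↦ a·f(c)` induces an isomorphism
    `(𝒜₊ⁿ/𝒜₊ⁿ⁺¹) ⊗ 𝒞 ≅ 𝒜₊ⁿℬ/𝒜₊ⁿ⁺¹ℬ` (sending the class of `a ⊗ c` to the class of
    `i(a)·f(c)`);
(3) independence: for two graded splittings `f, g` the induced isomorphisms agree, i.e.
    `i(a)·f(c) − i(a)·g(c) ∈ 𝒜₊ⁿ⁺¹ℬ` for all `a ∈ 𝒜₊ⁿ`, `c ∈ 𝒞`;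
(4) naturality: for any morphism `(αA, αB, αC)` to a second short exact sequence, with
    graded splittings `f`, `g` of the two sequences, the two induced maps on the quotients
    agree: `αB(i(a)·f(c)) − i'(αA(a))·g(αC(c)) ∈ 𝒜'₊ⁿ⁺¹ℬ'`.
-/

/-!
Over a field, a graded surjection has a graded linear splitting `f`, and the map
`φ : 𝒜 ⊗ 𝒞 → ℬ`, `a ⊗ c ↦ i(a)·f(c)`, is a linear isomorphism. It is surjective by induction
on the degree: `b - f(π b)` lies in `ker π = 𝒜₊ℬ`, and `𝒜₊` lives in positive degrees by
connectedness. It is injective because the coaction `ω = (id ⊗ π) ∘ Δ` is `𝒜`-linear and, by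
connectedness of `ℬ`, `ω(f c) = 1 ⊗ c` plus terms of lower `𝒞`-degree; so `ω ∘ φ` is
triangular for the grading of `𝒞`, with diagonal `i ⊗ id`. Since `φ` is `𝒜`-linear it carries
`𝒜₊ⁿ ⊗ 𝒞` onto `𝒜₊ⁿℬ`, which gives the isomorphism of filtration quotients. Two splittings,
or the two ways around a morphism of sequences, differ by elements of `ker π = 𝒜₊ℬ`, which
`𝒜₊ⁿ` multiplies into `𝒜₊ⁿ⁺¹ℬ`.
-/

open DirectSum Filter Function Finset.HasAntidiagonal

section GradedProjection

variable {ι R M : Type*} [DecidableEq ι] [Semiring R] [AddCommMonoid M] [Module R M]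
  (𝓜 : ι → Submodule R M) [Decomposition 𝓜]

def gradedProj (i : ι) : M →ₗ[R] M :=
  (𝓜 i).subtype ∘ₗ component R ι (fun i => 𝓜 i) i ∘ₗ (decomposeLinearEquiv 𝓜).toLinearMap

variable {𝓜}

theorem gradedProj_mem (i : ι) (m : M) : gradedProj 𝓜 i m ∈ 𝓜 i := (decompose 𝓜 m i).2

theorem gradedProj_of_mem {i : ι} {m : M} (hm : m ∈ 𝓜 i) : gradedProj 𝓜 i m = m :=
  decompose_of_mem_same 𝓜 hm

theorem gradedProj_of_mem_ne {i j : ι} {m : M} (hm : m ∈ 𝓜 i) (hij : i ≠ j) :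
    gradedProj 𝓜 j m = 0 :=
  decompose_of_mem_ne 𝓜 hm hij

theorem gradedProj_map_of_graded {N : Type*} [AddCommMonoid N] [Module R N]
    {𝓝 : ι → Submodule R N} [Decomposition 𝓝] {g : M →ₗ[R] N}
    (hg : ∀ i, ∀ m ∈ 𝓜 i, g m ∈ 𝓝 i) (i : ι) (m : M) :
    gradedProj 𝓝 i (g m) = g (gradedProj 𝓜 i m) := by
  have : gradedProj 𝓝 i ∘ₗ g = g ∘ₗ gradedProj 𝓜 i := decompose_lhom_ext 𝓜 fun j => by
    ext ⟨m, hm⟩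
    by_cases hji : j = i
    · subst hji
      simp [gradedProj_of_mem hm, gradedProj_of_mem (hg _ _ hm)]
    · simp [gradedProj_of_mem_ne hm hji, gradedProj_of_mem_ne (hg _ _ hm) hji]
  exact congr($this m)

end GradedProjection

section NatGraded

variable {R M : Type*} [CommSemiring R] [AddCommMonoid M] [Module R M]
  {𝓜 : ℕ → Submodule R M} [Decomposition 𝓜]

theorem eventually_sum_range_gradedProj (m : M) :
    ∀ᶠ n in atTop, ∑ q ∈ Finset.range n, gradedProj 𝓜 q m = m := by
  induction m using Decomposition.inductionOn 𝓜 with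
  | zero => exact Eventually.of_forall fun n => by simp
  | @homogeneous p m =>
    filter_upwards [eventually_gt_atTop p] with n hn
    rw [Finset.sum_eq_single_of_mem p (Finset.mem_range.2 hn)
      fun q _ hqp => gradedProj_of_mem_ne m.2 (Ne.symm hqp), gradedProj_of_mem m.2]
  | add m m' hm hm' =>
    filter_upwards [hm, hm'] with n h h'
    simp only [map_add, Finset.sum_add_distrib, h, h']

theorem eventually_sum_range_lTensor_gradedProj {V : Type*} [AddCommMonoid V] [Module R V]
    (x : V ⊗[R] M) :
    ∀ᶠ n in atTop, ∑ q ∈ Finset.range n, (gradedProj 𝓜 q).lTensor V x = x := by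
  induction x using TensorProduct.induction_on with
  | zero => exact Eventually.of_forall fun n => by simp
  | tmul v m =>
    filter_upwards [eventually_sum_range_gradedProj (𝓜 := 𝓜) m] with n h
    simp only [LinearMap.lTensor_tmul, ← TensorProduct.tmul_sum, h]
  | add x x' hx hx' =>
    filter_upwards [hx, hx'] with n h h'
    simp only [map_add, Finset.sum_add_distrib, h, h']

theorem gradedProj_apply₂ {N P : Type*} [AddCommMonoid N] [Module R N] [AddCommMonoid P]
    [Module R P] {𝓝 : ℕ → Submodule R N} {𝓞 : ℕ → Submodule R P} [Decomposition 𝓝]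
    [Decomposition 𝓞] {μ : M →ₗ[R] N →ₗ[R] P}
    (hμ : ∀ p q, ∀ m ∈ 𝓜 p, ∀ n ∈ 𝓝 q, μ m n ∈ 𝓞 (p + q)) (k : ℕ) (m : M) (n : N) :
    gradedProj 𝓞 k (μ m n)
      = ∑ x ∈ antidiagonal k, μ (gradedProj 𝓜 x.1 m) (gradedProj 𝓝 x.2 n) := by
  induction m using Decomposition.inductionOn 𝓜 generalizing n with
  | zero => simp
  | add m m' hm hm' => simp only [map_add, LinearMap.add_apply, hm, hm', Finset.sum_add_distrib]
  | @homogeneous p m =>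
    induction n using Decomposition.inductionOn 𝓝 with
    | zero => simp
    | add n n' hn hn' => simp only [map_add, hn, hn', Finset.sum_add_distrib]
    | @homogeneous q n =>
      have hoff : ∀ x : ℕ × ℕ, x ≠ (p, q) →
          μ (gradedProj 𝓜 x.1 m) (gradedProj 𝓝 x.2 n) = 0 := by
        rintro ⟨p', q'⟩ hx
        by_cases hp : p = p'
        · have hq : q ≠ q' := fun hq => hx (by rw [hp, hq])
          rw [gradedProj_of_mem_ne n.2 hq, map_zero]
        · rw [gradedProj_of_mem_ne m.2 hp, map_zero, LinearMap.zero_apply]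
      have hmem := hμ p q m m.2 n n.2
      by_cases hk : p + q = k
      · rw [Finset.sum_eq_single_of_mem (p, q) (mem_antidiagonal.2 hk) fun x _ => hoff x,
          gradedProj_of_mem m.2, gradedProj_of_mem n.2, gradedProj_of_mem (hk ▸ hmem)]
      · rw [gradedProj_of_mem_ne hmem hk]
        exact (Finset.sum_eq_zero fun x hx => hoff x fun h =>
          hk (mem_antidiagonal.1 (h ▸ hx))).symm

end NatGraded

theorem exists_graded_rightInverse {ι K M N : Type*} [DecidableEq ι] [Field K]
    [AddCommGroup M] [Module K M] [AddCommGroup N] [Module K N]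
    {𝓜 : ι → Submodule K M} {𝓝 : ι → Submodule K N} [Decomposition 𝓜] [Decomposition 𝓝]
    {π : M →ₗ[K] N} (hπ : ∀ i, ∀ m ∈ 𝓜 i, π m ∈ 𝓝 i) (hsurj : Surjective π) :
    ∃ f : N →ₗ[K] M, (∀ i, ∀ n ∈ 𝓝 i, f n ∈ 𝓜 i) ∧ π ∘ₗ f = LinearMap.id := by
  have hpiece : ∀ i, ∃ s : 𝓝 i →ₗ[K] 𝓜 i, ∀ n, π (s n) = n := fun i => by
    let πᵢ : 𝓜 i →ₗ[K] 𝓝 i := π.restrict (hπ i)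
    have hπᵢ : Surjective πᵢ := fun n => by
      obtain ⟨m, hm⟩ := hsurj n
      refine ⟨⟨gradedProj 𝓜 i m, gradedProj_mem i m⟩, Subtype.ext ?_⟩
      change π (gradedProj 𝓜 i m) = n
      rw [← gradedProj_map_of_graded hπ, hm, gradedProj_of_mem n.2]
    obtain ⟨s, hs⟩ := πᵢ.exists_rightInverse_of_surjective (LinearMap.range_eq_top.2 hπᵢ)
    exact ⟨s, fun n => congr(($hs n : N))⟩
  choose s hs using hpiece
  let f : N →ₗ[K] M :=
    toModule K ι M (fun i => (𝓜 i).subtype ∘ₗ s i) ∘ₗ (decomposeLinearEquiv 𝓝).toLinearMap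
  have hf : ∀ i (n : 𝓝 i), f n = s i n := fun i n => by
    simp [f, decomposeLinearEquiv_apply_coe]
  refine ⟨f, fun i n hn => hf i ⟨n, hn⟩ ▸ (s i _).2, decompose_lhom_ext 𝓝 fun i => ?_⟩
  ext n
  simp [hf, hs]

theorem injective_of_lTensor_gradedProj_triangular {R V W C : Type*} [CommRing R]
    [AddCommGroup V] [Module R V] [AddCommGroup W] [Module R W] [AddCommGroup C] [Module R C]
    [Module.Flat R C] {𝓒 : ℕ → Submodule R C} [Decomposition 𝓒] {j : V →ₗ[R] W}
    (hj : Injective j) (Φ : V ⊗[R] C →ₗ[R] W ⊗[R] C)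
    (hlt : ∀ q k, q < k → ∀ v, ∀ c ∈ 𝓒 q, (gradedProj 𝓒 k).lTensor W (Φ (v ⊗ₜ c)) = 0)
    (hdiag : ∀ q v, ∀ c ∈ 𝓒 q, (gradedProj 𝓒 q).lTensor W (Φ (v ⊗ₜ c)) = j v ⊗ₜ c) :
    Injective Φ := by
  set P : ℕ → V ⊗[R] C →ₗ[R] V ⊗[R] C := fun q => (gradedProj 𝓒 q).lTensor V
  have hlt' : ∀ q k, q < k → (gradedProj 𝓒 k).lTensor W ∘ₗ Φ ∘ₗ P q = 0 := fun q k hqk =>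
    TensorProduct.ext' fun v c => hlt q k hqk v _ (gradedProj_mem q c)
  have hdiag' : ∀ k, (gradedProj 𝓒 k).lTensor W ∘ₗ Φ ∘ₗ P k = j.rTensor C ∘ₗ P k := fun k =>
    TensorProduct.ext' fun v c => hdiag k v _ (gradedProj_mem k c)
  rw [injective_iff_map_eq_zero]
  intro x hx
  obtain ⟨N, hN⟩ := eventually_atTop.mp (eventually_sum_range_lTensor_gradedProj (𝓜 := 𝓒) x)
  have hlarge : ∀ k > N, P k x = 0 := fun k hk => by
    have h := (hN (k + 1) (by omega)).trans (hN k hk.le).symm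
    rwa [Finset.sum_range_succ, add_eq_left] at h
  have hstep : ∀ k, (∀ q > k, P q x = 0) → P k x = 0 := by
    intro k hgt
    have hzero : j.rTensor C (P k x) = 0 := by
      calc j.rTensor C (P k x)
          = ∑ q ∈ Finset.range (max N (k + 1)), (gradedProj 𝓒 k).lTensor W (Φ (P q x)) := by
            rw [Finset.sum_eq_single_of_mem k (Finset.mem_range.2 (by omega))]
            · exact (LinearMap.congr_fun (hdiag' k) x).symm
            intro q _ hqk
            rcases lt_or_gt_of_ne hqk with hq | hq
            · exact LinearMap.congr_fun (hlt' q k hq) x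
            · rw [hgt q hq, map_zero, map_zero]
        _ = 0 := by rw [← map_sum, ← map_sum, hN _ (le_max_left _ _), hx, map_zero]
    exact Module.Flat.rTensor_preserves_injective_linearMap j hj (hzero.trans (map_zero _).symm)
  rw [← hN N le_rfl]
  exact Finset.sum_eq_zero fun k _ => Nat.strong_decreasing_induction ⟨N, hlarge⟩ hstep k

theorem exists_quotient_tensor_equiv_of_injective {R A B C : Type*} [CommRing R]
    [AddCommGroup A] [Module R A] [AddCommGroup B] [Module R B] [AddCommGroup C] [Module R C]
    [Module.Flat R C] {φ : A ⊗[R] C →ₗ[R] B} (hφ : Injective φ)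
    {N N₁ : Submodule R A} {M M₁ : Submodule R B} (hle : N₁ ≤ N)
    (hN : LinearMap.range (φ ∘ₗ N.subtype.rTensor C) = M)
    (hN₁ : LinearMap.range (φ ∘ₗ N₁.subtype.rTensor C) = M₁) :
    ∃ e : ((N ⧸ N₁.comap N.subtype) ⊗[R] C) ≃ₗ[R] (M ⧸ M₁.comap M.subtype),
      ∀ (a : A) (ha : a ∈ N) (c : C),
        e (Submodule.Quotient.mk ⟨a, ha⟩ ⊗ₜ[R] c)
          = Submodule.Quotient.mk ⟨φ (a ⊗ₜ c), hN ▸ ⟨⟨a, ha⟩ ⊗ₜ c, rfl⟩⟩ := by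
  set ψ := φ ∘ₗ N.subtype.rTensor C
  have hψ : Injective ψ :=
    hφ.comp (Module.Flat.rTensor_preserves_injective_linearMap _ N.injective_subtype)
  let eN : N ⊗[R] C ≃ₗ[R] M := (LinearEquiv.ofInjective ψ hψ).trans (LinearEquiv.ofEq _ _ hN)
  let σ : N₁.comap N.subtype →ₗ[R] N₁ := N.subtype.restrict fun _ hx => hx
  have hσ : Surjective σ := fun a => ⟨⟨⟨a, hle a.2⟩, a.2⟩, rfl⟩
  have hrange : LinearMap.range (ψ ∘ₗ (N₁.comap N.subtype).subtype.rTensor C) = M₁ := by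
    have : ψ ∘ₗ (N₁.comap N.subtype).subtype.rTensor C
        = (φ ∘ₗ N₁.subtype.rTensor C) ∘ₗ σ.rTensor C := by
      simp only [ψ, LinearMap.comp_assoc, ← LinearMap.rTensor_comp]
      rfl
    rw [this, LinearMap.range_comp_of_range_eq_top _
      (LinearMap.range_eq_top.2 (LinearMap.rTensor_surjective C hσ)), hN₁]
  have hmap : (LinearMap.range ((N₁.comap N.subtype).subtype.rTensor C)).map eN.toLinearMap
      = M₁.comap M.subtype := by
    apply Submodule.map_injective_of_injective M.injective_subtype
    rw [Submodule.map_comap_subtype, ← Submodule.map_comp, ← LinearMap.range_comp]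
    have hψM : M.subtype ∘ₗ eN.toLinearMap = ψ := rfl
    have hM₁ : M₁ ≤ M := hrange ▸ hN ▸ LinearMap.range_comp_le_range _ _
    rw [hψM, hrange, inf_eq_right.2 hM₁]
  exact ⟨TensorProduct.quotientTensorEquiv C _ ≪≫ₗ Submodule.Quotient.equiv _ _ eN hmap,
    fun a ha c => rfl⟩

namespace HopfStr

variable {K X : Type*} [Field K] [AddCommGroup X] [Module K X] (S : HopfStr K X)

theorem mul_one' (x : X) : S.mul x S.one = x := by
  rw [S.mul_comm', S.one_mul']

theorem lid_rTensor_counit_comul (x : X) :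
    TensorProduct.lid K X (S.counit.rTensor X (S.comul x)) = x :=
  congr($S.counit_comul x)

theorem rid_lTensor_counit_comul (x : X) :
    TensorProduct.rid K X (S.counit.lTensor X (S.comul x)) = x := by
  have hflip : ∀ t : X ⊗[K] X, TensorProduct.rid K X (S.counit.lTensor X t)
      = TensorProduct.lid K X (S.counit.rTensor X (TensorProduct.comm K X X t)) := by
    intro t
    induction t using TensorProduct.induction_on with
    | zero => simp
    | tmul y z => simp
    | add t t' h h' => simp only [map_add, h, h']
  rw [hflip]
  convert S.lid_rTensor_counit_comul x using 3
  exact congr($S.cocomm x)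

end HopfStr

section Augmentation

variable {K A B C A' : Type*} [Field K] [AddCommGroup A] [Module K A]
  [AddCommGroup B] [Module K B] [AddCommGroup C] [Module K C] [AddCommGroup A'] [Module K A']
  {SA : HopfStr K A} {SB : HopfStr K B} {SC : HopfStr K C} {SA' : HopfStr K A'}
  {i : A →ₗ[K] B} {π : B →ₗ[K] C}

theorem augPow_succ_le (n : ℕ) : augPow SA (n + 1) ≤ augPow SA n := by
  induction n with
  | zero => exact le_top
  | succ n ih =>
    refine Submodule.span_le.2 ?_
    rintro _ ⟨a, ha, b, hb, rfl⟩
    exact Submodule.subset_span ⟨a, ha, b, ih hb, rfl⟩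

theorem mul_mem_augPow {n : ℕ} {a : A} (ha : a ∈ augPow SA n) (a' : A) :
    SA.mul a a' ∈ augPow SA n := by
  induction n generalizing a with
  | zero => trivial
  | succ n ih =>
    induction ha using Submodule.span_induction with
    | mem x hx =>
      obtain ⟨a₁, ha₁, b, hb, rfl⟩ := hx
      rw [SA.mul_assoc']
      exact Submodule.subset_span ⟨a₁, ha₁, SA.mul b a', ih hb, rfl⟩
    | zero => simp
    | add x y _ _ hx hy => simpa only [map_add, LinearMap.add_apply] using add_mem hx hy
    | smul r x _ hx => simpa only [map_smul, LinearMap.smul_apply] using Submodule.smul_mem _ r hx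

theorem IsHopfHom.map_mem_augPow {α : A →ₗ[K] A'} (hα : IsHopfHom SA SA' α) {n : ℕ} {a : A}
    (ha : a ∈ augPow SA n) : α a ∈ augPow SA' n := by
  induction n generalizing a with
  | zero => trivial
  | succ n ih =>
    induction ha using Submodule.span_induction with
    | mem x hx =>
      obtain ⟨a₁, ha₁, b, hb, rfl⟩ := hx
      rw [hα.map_mul]
      refine Submodule.subset_span ⟨α a₁, ?_, α b, ih hb, rfl⟩
      rw [LinearMap.mem_ker, ← LinearMap.comp_apply, hα.map_counit]
      exact ha₁
    | zero => simp
    | add x y _ _ hx hy => simpa only [map_add] using add_mem hx hy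
    | smul r x _ hx => simpa only [map_smul] using Submodule.smul_mem _ r hx

theorem IsHopfSES.comp_mul_left (hses : IsHopfSES SA SB SC i π) (a : A) :
    π ∘ₗ SB.mul (i a) = SA.counit a • π := by
  have hker : a - SA.counit a • SA.one ∈ LinearMap.ker SA.counit := by
    simp [SA.counit_one]
  have hπi : π (i a) = SA.counit a • SC.one := by
    have h : SB.mul (i (a - SA.counit a • SA.one)) SB.one ∈ LinearMap.ker π :=
      hses.2.2.2.2.2 ▸ Submodule.subset_span ⟨_, hker, SB.one, rfl⟩
    rw [LinearMap.mem_ker, SB.mul_one', map_sub, map_sub, sub_eq_zero, map_smul, map_smul,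
      hses.1.map_one, hses.2.1.map_one] at h
    exact h
  ext b
  simp [hses.2.1.map_mul, hπi, SC.one_mul']

theorem IsHopfSES.mul_mem_augPowSmul_succ (hses : IsHopfSES SA SB SC i π) {n : ℕ} {a : A}
    (ha : a ∈ augPow SA n) {z : B} (hz : z ∈ LinearMap.ker π) :
    SB.mul (i a) z ∈ augPowSmul SA SB i (n + 1) := by
  rw [hses.2.2.2.2.2] at hz
  induction hz using Submodule.span_induction with
  | mem x hx =>
    obtain ⟨a', ha', b, rfl⟩ := hx
    rw [← SB.mul_assoc', ← hses.1.map_mul, SA.mul_comm']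
    exact Submodule.subset_span ⟨SA.mul a' a, Submodule.subset_span ⟨a', ha', a, ha, rfl⟩, b, rfl⟩
  | zero => simp
  | add x y _ _ hx hy => simpa only [map_add] using add_mem hx hy
  | smul r x _ hx => simpa only [map_smul] using Submodule.smul_mem _ r hx

end Augmentation

section SplitMul

variable {K A B C : Type*} [Field K] [AddCommGroup A] [Module K A]
  [AddCommGroup B] [Module K B] [AddCommGroup C] [Module K C]
  {SA : HopfStr K A} {SB : HopfStr K B} {SC : HopfStr K C}
  {i : A →ₗ[K] B} {π : B →ₗ[K] C}

def splitMul (SB : HopfStr K B) (i : A →ₗ[K] B) (f : C →ₗ[K] B) : A ⊗[K] C →ₗ[K] B :=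
  TensorProduct.lift ((SB.mul ∘ₗ i).compl₂ f)

@[simp]
theorem splitMul_tmul (f : C →ₗ[K] B) (a : A) (c : C) :
    splitMul SB i f (a ⊗ₜ c) = SB.mul (i a) (f c) := rfl

theorem IsHopfHom.mul_splitMul (hi : IsHopfHom SA SB i) (f : C →ₗ[K] B) (a : A)
    (x : A ⊗[K] C) :
    SB.mul (i a) (splitMul SB i f x) = splitMul SB i f ((SA.mul a).rTensor C x) := by
  induction x using TensorProduct.induction_on with
  | zero => simp
  | tmul a' c => simp [hi.map_mul, SB.mul_assoc']
  | add x y hx hy => simp only [map_add, hx, hy]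

theorem IsHopfHom.range_splitMul_augPow (hi : IsHopfHom SA SB i) {f : C →ₗ[K] B}
    (hsurj : Surjective (splitMul SB i f)) (n : ℕ) :
    LinearMap.range (splitMul SB i f ∘ₗ (augPow SA n).subtype.rTensor C)
      = augPowSmul SA SB i n := by
  apply le_antisymm
  · rintro _ ⟨t, rfl⟩
    induction t using TensorProduct.induction_on with
    | zero => simp
    | tmul a c => exact Submodule.subset_span ⟨a, a.2, f c, rfl⟩
    | add s t hs ht => simpa only [map_add] using add_mem hs ht
  · refine Submodule.span_le.2 ?_
    rintro _ ⟨a, ha, b, rfl⟩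
    obtain ⟨x, rfl⟩ := hsurj b
    let μ : A →ₗ[K] augPow SA n := (SA.mul a).codRestrict _ fun a' => mul_mem_augPow ha a'
    refine ⟨μ.rTensor C x, ?_⟩
    rw [hi.mul_splitMul, LinearMap.comp_apply, ← LinearMap.rTensor_comp_apply]
    rfl

def coaction (SB : HopfStr K B) (π : B →ₗ[K] C) : B →ₗ[K] B ⊗[K] C :=
  π.lTensor B ∘ₗ SB.comul

theorem IsHopfSES.coaction_mul_left (hses : IsHopfSES SA SB SC i π) (a : A) (y : B) :
    coaction SB π (SB.mul (i a) y) = (SB.mul (i a)).rTensor C (coaction SB π y) := by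
  -- `Δ(i(a)·y) = (i ⊗ i)(Δa)·Δy`, and `π(i(a'')·y'') = ε(a'')·π(y'')` collapses `Δa` to `a`.
  have key : ∀ t : A ⊗[K] A,
      π.lTensor B (TensorProduct.homTensorHomMap (RingHom.id K) B B B B
        (TensorProduct.map SB.mul SB.mul (TensorProduct.map i i t)) (SB.comul y))
      = (SB.mul (i (TensorProduct.rid K A (SA.counit.lTensor A t)))).rTensor C
          (coaction SB π y) := by
    intro t
    induction t using TensorProduct.induction_on with
    | zero => simp
    | tmul u v =>
      have hcomm : π.lTensor B ∘ₗ TensorProduct.map (SB.mul (i u)) (SB.mul (i v))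
          = SA.counit v • ((SB.mul (i u)).rTensor C ∘ₗ π.lTensor B) := by
        rw [LinearMap.lTensor_comp_map, hses.comp_mul_left, TensorProduct.map_smul_right,
          LinearMap.rTensor_comp_lTensor]
      rw [TensorProduct.map_tmul, TensorProduct.map_tmul, TensorProduct.homTensorHomMap_apply,
        LinearMap.lTensor_tmul, TensorProduct.rid_tmul, ← LinearMap.comp_apply, hcomm,
        map_smul, map_smul, LinearMap.rTensor_smul]
      rfl
    | add s t hs ht => simp only [map_add, LinearMap.add_apply, hs, ht, LinearMap.rTensor_add]
  have hΔi : SB.comul (i a) = TensorProduct.map i i (SA.comul a) :=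
    LinearMap.congr_fun hses.1.map_comul a
  rw [coaction, LinearMap.comp_apply, SB.comul_mul, hΔi, key, SA.rid_lTensor_counit_comul]
  rfl

end SplitMul

namespace GradedHopfStr

variable {K X : Type*} [Field K] [AddCommGroup X] [Module K X] (S : GradedHopfStr K X)

instance decomposition : Decomposition S.grading := S.is_internal.chooseDecomposition

variable {S}

theorem gradedProj_zero (hS : S.Connected) (x : X) :
    gradedProj S.grading 0 x = S.counit x • S.one := by
  suffices h : gradedProj S.grading 0 = S.counit.smulRight S.one from congr($h x)
  refine decompose_lhom_ext S.grading fun n => ?_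
  ext ⟨x, hx⟩
  rcases Nat.eq_zero_or_pos n with rfl | hn
  · obtain ⟨r, rfl⟩ := Submodule.mem_span_singleton.1 (hS ▸ hx)
    simp [gradedProj_of_mem hx, S.counit_one]
  · simp [gradedProj_of_mem_ne hx hn.ne', S.counit_graded n hn x hx]

theorem gradedProj_zero_of_mem_ker_counit (hS : S.Connected) {x : X}
    (hx : x ∈ LinearMap.ker S.counit) : gradedProj S.grading 0 x = 0 := by
  rw [gradedProj_zero hS, LinearMap.mem_ker.1 hx, zero_smul]

theorem apply_comul_eq {W : Type*} [AddCommGroup W] [Module K W] {g h : X ⊗[K] X →ₗ[K] W}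
    {n : ℕ} (hgh : ∀ p r, p + r = n → ∀ x ∈ S.grading p, ∀ y ∈ S.grading r,
      g (x ⊗ₜ y) = h (x ⊗ₜ y)) {x : X} (hx : x ∈ S.grading n) :
    g (S.comul x) = h (S.comul x) := by
  suffices hle : ∀ p : {p : ℕ × ℕ // p.1 + p.2 = n}, LinearMap.range
      (TensorProduct.map (S.grading p.1.1).subtype (S.grading p.1.2).subtype)
        ≤ LinearMap.eqLocus g h from iSup_le hle (S.comul_graded n x hx)
  rintro p _ ⟨t, rfl⟩
  have hext : g ∘ₗ TensorProduct.map (S.grading p.1.1).subtype (S.grading p.1.2).subtype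
      = h ∘ₗ TensorProduct.map (S.grading p.1.1).subtype (S.grading p.1.2).subtype :=
    TensorProduct.ext' fun y z => hgh _ _ p.2 y y.2 z z.2
  exact congr($hext t)

end GradedHopfStr

section Graded

variable {K A B C : Type*} [Field K] [AddCommGroup A] [Module K A]
  [AddCommGroup B] [Module K B] [AddCommGroup C] [Module K C]
  {SA : GradedHopfStr K A} {SB : GradedHopfStr K B} {SC : GradedHopfStr K C}
  {i : A →ₗ[K] B} {π : B →ₗ[K] C} {f : C →ₗ[K] B}

theorem lTensor_gradedProj_coaction_of_lt (hπ : ∀ n, ∀ b ∈ SB.grading n, π b ∈ SC.grading n)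
    {q k : ℕ} (hqk : q < k) {x : B} (hx : x ∈ SB.grading q) :
    (gradedProj SC.grading k).lTensor B (coaction SB.toHopfStr π x) = 0 := by
  rw [coaction, LinearMap.comp_apply, ← LinearMap.lTensor_comp_apply]
  refine SB.apply_comul_eq (g := (gradedProj SC.grading k ∘ₗ π).lTensor B) (h := 0)
    (fun p r hpr y _ z hz => ?_) hx
  simp [gradedProj_of_mem_ne (hπ r z hz) (by omega : r ≠ k)]

theorem lTensor_gradedProj_coaction_self (hB : SB.Connected)
    (hπ : ∀ n, ∀ b ∈ SB.grading n, π b ∈ SC.grading n) {q : ℕ} {x : B}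
    (hx : x ∈ SB.grading q) :
    (gradedProj SC.grading q).lTensor B (coaction SB.toHopfStr π x) = SB.one ⊗ₜ π x := by
  have h := SB.apply_comul_eq (g := (gradedProj SC.grading q ∘ₗ π).lTensor B)
    (h := TensorProduct.map (SB.counit.smulRight SB.one) (gradedProj SC.grading q ∘ₗ π))
    (fun p r hpr y hy z hz => ?_) hx
  · rw [coaction, LinearMap.comp_apply, ← LinearMap.lTensor_comp_apply, h]
    have hfactor : TensorProduct.map (SB.counit.smulRight SB.one) (gradedProj SC.grading q ∘ₗ π)
        = TensorProduct.mk K B C SB.one ∘ₗ (gradedProj SC.grading q ∘ₗ π) ∘ₗ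
          (TensorProduct.lid K B).toLinearMap ∘ₗ SB.counit.rTensor B :=
      TensorProduct.ext' fun y z => by simp [TensorProduct.smul_tmul]
    rw [hfactor]
    simp [SB.lid_rTensor_counit_comul, gradedProj_of_mem (hπ q x hx)]
  · by_cases hrq : r = q
    · subst hrq
      obtain rfl : p = 0 := by omega
      simp [← GradedHopfStr.gradedProj_zero hB, gradedProj_of_mem hy]
    · simp [gradedProj_of_mem_ne (hπ r z hz) hrq]

theorem splitMul_injective (hses : IsHopfSES SA.toHopfStr SB.toHopfStr SC.toHopfStr i π)
    (hB : SB.Connected) (hπ : ∀ n, ∀ b ∈ SB.grading n, π b ∈ SC.grading n)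
    (hf : ∀ n, ∀ c ∈ SC.grading n, f c ∈ SB.grading n) (hfπ : π ∘ₗ f = LinearMap.id) :
    Injective (splitMul SB.toHopfStr i f) := by
  refine Injective.of_comp (f := coaction SB.toHopfStr π) ?_
  rw [← LinearMap.coe_comp]
  refine injective_of_lTensor_gradedProj_triangular (𝓒 := SC.grading) hses.2.2.1 _
    (fun q k hqk a c hc => ?_) fun q a c hc => ?_
  all_goals
    rw [LinearMap.comp_apply, splitMul_tmul, hses.coaction_mul_left,
      ← LinearMap.comp_apply, LinearMap.lTensor_comp_rTensor, ← LinearMap.rTensor_comp_lTensor,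
      LinearMap.comp_apply]
  · rw [lTensor_gradedProj_coaction_of_lt hπ hqk (hf q c hc), map_zero]
  · rw [lTensor_gradedProj_coaction_self hB hπ (hf q c hc), LinearMap.rTensor_tmul,
      SB.mul_one', ← LinearMap.comp_apply π f, hfπ, LinearMap.id_apply]

theorem IsHopfSES.gradedProj_mem_of_mem_ker
    (hses : IsHopfSES SA.toHopfStr SB.toHopfStr SC.toHopfStr i π) (hA : SA.Connected)
    (hi : ∀ n, ∀ a ∈ SA.grading n, i a ∈ SB.grading n) {R : Submodule K B}
    (hR : ∀ a, ∀ y ∈ R, SB.mul (i a) y ∈ R) {n : ℕ}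
    (hlow : ∀ q < n, ∀ b ∈ SB.grading q, b ∈ R) {z : B} (hz : z ∈ LinearMap.ker π) :
    gradedProj SB.grading n z ∈ R := by
  rw [hses.2.2.2.2.2] at hz
  refine (Submodule.span_le (p := R.comap (gradedProj SB.grading n)) |>.2 ?_) hz
  rintro _ ⟨a, ha, b, rfl⟩
  rw [SetLike.mem_coe, Submodule.mem_comap, ← LinearMap.comp_apply SB.mul i,
    gradedProj_apply₂ (fun p q a ha b hb => SB.mul_graded p q _ (hi p a ha) b hb)]
  refine Submodule.sum_mem _ fun ⟨p, q⟩ hpq => ?_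
  rcases Nat.eq_zero_or_pos p with rfl | hp
  · rw [GradedHopfStr.gradedProj_zero_of_mem_ker_counit hA ha, map_zero, LinearMap.zero_apply]
    exact zero_mem _
  · rw [mem_antidiagonal] at hpq
    exact hR _ _ (hlow q (by omega) _ (gradedProj_mem q b))

theorem splitMul_surjective (hses : IsHopfSES SA.toHopfStr SB.toHopfStr SC.toHopfStr i π)
    (hA : SA.Connected) (hi : ∀ n, ∀ a ∈ SA.grading n, i a ∈ SB.grading n)
    (hπ : ∀ n, ∀ b ∈ SB.grading n, π b ∈ SC.grading n)
    (hf : ∀ n, ∀ c ∈ SC.grading n, f c ∈ SB.grading n) (hfπ : π ∘ₗ f = LinearMap.id) :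
    Surjective (splitMul SB.toHopfStr i f) := by
  set R := LinearMap.range (splitMul SB.toHopfStr i f)
  have hR : ∀ a, ∀ y ∈ R, SB.mul (i a) y ∈ R := by
    rintro a _ ⟨x, rfl⟩
    exact ⟨_, (hses.1.mul_splitMul f a x).symm⟩
  have hfR : ∀ c, f c ∈ R := fun c =>
    ⟨SA.one ⊗ₜ c, by rw [splitMul_tmul, hses.1.map_one, SB.one_mul']⟩
  have hhom : ∀ n, ∀ b ∈ SB.grading n, b ∈ R := by
    intro n
    induction n using Nat.strong_induction_on with
    | _ n ih =>
      intro b hb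
      have hker : b - f (π b) ∈ LinearMap.ker π := by
        rw [LinearMap.sub_mem_ker_iff, ← LinearMap.comp_apply π f, hfπ, LinearMap.id_apply]
      have hdeg : b - f (π b) ∈ SB.grading n := sub_mem hb (hf n _ (hπ n b hb))
      rw [← sub_add_cancel b (f (π b)), ← gradedProj_of_mem hdeg]
      exact add_mem (hses.gradedProj_mem_of_mem_ker hA hi hR ih hker) (hfR _)
  intro b
  obtain ⟨n, hn⟩ := (eventually_sum_range_gradedProj (𝓜 := SB.grading) b).exists
  rw [← LinearMap.mem_range, ← hn]
  exact Submodule.sum_mem _ fun q _ => hhom q _ (gradedProj_mem q b)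

end Graded

theorem stmt2_general
    (K : Type*) [Field K]
    (A B C : Type*)
    [AddCommGroup A] [Module K A] [AddCommGroup B] [Module K B] [AddCommGroup C] [Module K C]
    (SA : GradedHopfStr K A) (SB : GradedHopfStr K B) (SC : GradedHopfStr K C)
    (hA : SA.Connected) (hB : SB.Connected)
    (i : A →ₗ[K] B) (π : B →ₗ[K] C)
    (hi : ∀ n : ℕ, ∀ a ∈ SA.grading n, i a ∈ SB.grading n)
    (hπ : ∀ n : ℕ, ∀ b ∈ SB.grading n, π b ∈ SC.grading n)
    (hses : IsHopfSES SA.toHopfStr SB.toHopfStr SC.toHopfStr i π) :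
    -- (1) existence of a graded linear splitting of π
    (∃ f : C →ₗ[K] B, (∀ n : ℕ, ∀ c ∈ SC.grading n, f c ∈ SB.grading n)
        ∧ π.comp f = LinearMap.id)
    -- (2) each graded splitting induces an isomorphism (𝒜₊ⁿ/𝒜₊ⁿ⁺¹) ⊗ 𝒞 ≅ 𝒜₊ⁿℬ/𝒜₊ⁿ⁺¹ℬ
    ∧ (∀ f : C →ₗ[K] B, (∀ n : ℕ, ∀ c ∈ SC.grading n, f c ∈ SB.grading n) →
        π.comp f = LinearMap.id → ∀ n : ℕ,
        ∃ e : ((augPow SA.toHopfStr n ⧸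
                  (augPow SA.toHopfStr (n+1)).comap (augPow SA.toHopfStr n).subtype) ⊗[K] C)
              ≃ₗ[K]
              (augPowSmul SA.toHopfStr SB.toHopfStr i n ⧸
                  (augPowSmul SA.toHopfStr SB.toHopfStr i (n+1)).comap
                    (augPowSmul SA.toHopfStr SB.toHopfStr i n).subtype),
          ∀ (a : A) (ha : a ∈ augPow SA.toHopfStr n) (c : C),
            e (Submodule.Quotient.mk (⟨a, ha⟩ : augPow SA.toHopfStr n) ⊗ₜ[K] c)
              = Submodule.Quotient.mk
                  (⟨SB.mul (i a) (f c), Submodule.subset_span ⟨a, ha, f c, rfl⟩⟩ :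
                    augPowSmul SA.toHopfStr SB.toHopfStr i n))
    -- (3) the isomorphism does not depend on the choice of the graded splitting
    ∧ (∀ f g : C →ₗ[K] B,
        (∀ n : ℕ, ∀ c ∈ SC.grading n, f c ∈ SB.grading n) → π.comp f = LinearMap.id →
        (∀ n : ℕ, ∀ c ∈ SC.grading n, g c ∈ SB.grading n) → π.comp g = LinearMap.id →
        ∀ n : ℕ, ∀ a ∈ augPow SA.toHopfStr n, ∀ c : C,
          SB.mul (i a) (f c) - SB.mul (i a) (g c)
            ∈ augPowSmul SA.toHopfStr SB.toHopfStr i (n+1))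
    -- (4) the isomorphism is natural in the short exact sequence
    ∧ (∀ (A' B' C' : Type _)
        (_ : AddCommGroup A') (_ : Module K A') (_ : AddCommGroup B') (_ : Module K B')
        (_ : AddCommGroup C') (_ : Module K C')
        (SA' : GradedHopfStr K A') (SB' : GradedHopfStr K B') (SC' : GradedHopfStr K C'),
        SA'.Connected → SB'.Connected → SC'.Connected →
        ∀ (i' : A' →ₗ[K] B') (π' : B' →ₗ[K] C'),
        (∀ n : ℕ, ∀ a ∈ SA'.grading n, i' a ∈ SB'.grading n) →
        (∀ n : ℕ, ∀ b ∈ SB'.grading n, π' b ∈ SC'.grading n) →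
        IsHopfSES SA'.toHopfStr SB'.toHopfStr SC'.toHopfStr i' π' →
        ∀ (αA : A →ₗ[K] A') (αB : B →ₗ[K] B') (αC : C →ₗ[K] C'),
        IsHopfHom SA.toHopfStr SA'.toHopfStr αA →
        IsHopfHom SB.toHopfStr SB'.toHopfStr αB →
        IsHopfHom SC.toHopfStr SC'.toHopfStr αC →
        (∀ n : ℕ, ∀ a ∈ SA.grading n, αA a ∈ SA'.grading n) →
        (∀ n : ℕ, ∀ b ∈ SB.grading n, αB b ∈ SB'.grading n) →
        (∀ n : ℕ, ∀ c ∈ SC.grading n, αC c ∈ SC'.grading n) →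
        αB.comp i = i'.comp αA → αC.comp π = π'.comp αB →
        ∀ (f : C →ₗ[K] B) (g : C' →ₗ[K] B'),
        (∀ n : ℕ, ∀ c ∈ SC.grading n, f c ∈ SB.grading n) → π.comp f = LinearMap.id →
        (∀ n : ℕ, ∀ c ∈ SC'.grading n, g c ∈ SB'.grading n) → π'.comp g = LinearMap.id →
        ∀ n : ℕ, ∀ a ∈ augPow SA.toHopfStr n, ∀ c : C,
          αB (SB.mul (i a) (f c)) - SB'.mul (i' (αA a)) (g (αC c))
            ∈ augPowSmul SA'.toHopfStr SB'.toHopfStr i' (n+1)) := by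
  obtain ⟨f₀, hf₀, hf₀π⟩ := exists_graded_rightInverse hπ hses.2.2.2.1
  refine ⟨⟨f₀, hf₀, hf₀π⟩, fun f hf hfπ n => ?_, fun f g _ hfπ _ hgπ n a ha c => ?_, ?_⟩
  · have hsurj := splitMul_surjective hses hA hi hπ hf hfπ
    exact exists_quotient_tensor_equiv_of_injective (splitMul_injective hses hB hπ hf hfπ)
      (augPow_succ_le n) (hses.1.range_splitMul_augPow hsurj n)
      (hses.1.range_splitMul_augPow hsurj (n + 1))
  · rw [← map_sub]
    refine hses.mul_mem_augPowSmul_succ ha (LinearMap.sub_mem_ker_iff.2 ?_)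
    rw [← LinearMap.comp_apply, ← LinearMap.comp_apply, hfπ, hgπ]
  · intro A' B' C' _ _ _ _ _ _ SA' SB' SC' _ _ _ i' π' _ _ hses' αA αB αC hαA hαB _ _ _ _
      hαi hαπ f g _ hfπ _ hgπ n a ha c
    have hker : αB (f c) - g (αC c) ∈ LinearMap.ker π' := by
      rw [LinearMap.sub_mem_ker_iff, ← LinearMap.comp_apply π' αB, ← hαπ, LinearMap.comp_apply,
        ← LinearMap.comp_apply π f, ← LinearMap.comp_apply π' g, hfπ, hgπ]
      rfl
    rw [hαB.map_mul, ← LinearMap.comp_apply αB i, hαi, LinearMap.comp_apply, ← map_sub]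
    exact hses'.mul_mem_augPowSmul_succ (hαA.map_mem_augPow ha) hker

theorem stmt2
    (K : Type*) [Field K]
    (A B C : Type*)
    [AddCommGroup A] [Module K A] [AddCommGroup B] [Module K B] [AddCommGroup C] [Module K C]
    (SA : GradedHopfStr K A) (SB : GradedHopfStr K B) (SC : GradedHopfStr K C)
    (hA : SA.Connected) (hB : SB.Connected) (hC : SC.Connected)
    (i : A →ₗ[K] B) (π : B →ₗ[K] C)
    (hi : ∀ n : ℕ, ∀ a ∈ SA.grading n, i a ∈ SB.grading n)
    (hπ : ∀ n : ℕ, ∀ b ∈ SB.grading n, π b ∈ SC.grading n)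
    (hses : IsHopfSES SA.toHopfStr SB.toHopfStr SC.toHopfStr i π) :
    -- (1) existence of a graded linear splitting of π
    (∃ f : C →ₗ[K] B, (∀ n : ℕ, ∀ c ∈ SC.grading n, f c ∈ SB.grading n)
        ∧ π.comp f = LinearMap.id)
    -- (2) each graded splitting induces an isomorphism (𝒜₊ⁿ/𝒜₊ⁿ⁺¹) ⊗ 𝒞 ≅ 𝒜₊ⁿℬ/𝒜₊ⁿ⁺¹ℬ
    ∧ (∀ f : C →ₗ[K] B, (∀ n : ℕ, ∀ c ∈ SC.grading n, f c ∈ SB.grading n) →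
        π.comp f = LinearMap.id → ∀ n : ℕ,
        ∃ e : ((augPow SA.toHopfStr n ⧸
                  (augPow SA.toHopfStr (n+1)).comap (augPow SA.toHopfStr n).subtype) ⊗[K] C)
              ≃ₗ[K]
              (augPowSmul SA.toHopfStr SB.toHopfStr i n ⧸
                  (augPowSmul SA.toHopfStr SB.toHopfStr i (n+1)).comap
                    (augPowSmul SA.toHopfStr SB.toHopfStr i n).subtype),
          ∀ (a : A) (ha : a ∈ augPow SA.toHopfStr n) (c : C),
            e (Submodule.Quotient.mk (⟨a, ha⟩ : augPow SA.toHopfStr n) ⊗ₜ[K] c)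
              = Submodule.Quotient.mk
                  (⟨SB.mul (i a) (f c), Submodule.subset_span ⟨a, ha, f c, rfl⟩⟩ :
                    augPowSmul SA.toHopfStr SB.toHopfStr i n))
    -- (3) the isomorphism does not depend on the choice of the graded splitting
    ∧ (∀ f g : C →ₗ[K] B,
        (∀ n : ℕ, ∀ c ∈ SC.grading n, f c ∈ SB.grading n) → π.comp f = LinearMap.id →
        (∀ n : ℕ, ∀ c ∈ SC.grading n, g c ∈ SB.grading n) → π.comp g = LinearMap.id →
        ∀ n : ℕ, ∀ a ∈ augPow SA.toHopfStr n, ∀ c : C,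
          SB.mul (i a) (f c) - SB.mul (i a) (g c)
            ∈ augPowSmul SA.toHopfStr SB.toHopfStr i (n+1))
    -- (4) the isomorphism is natural in the short exact sequence
    ∧ (∀ (A' B' C' : Type _)
        (_ : AddCommGroup A') (_ : Module K A') (_ : AddCommGroup B') (_ : Module K B')
        (_ : AddCommGroup C') (_ : Module K C')
        (SA' : GradedHopfStr K A') (SB' : GradedHopfStr K B') (SC' : GradedHopfStr K C'),
        SA'.Connected → SB'.Connected → SC'.Connected →
        ∀ (i' : A' →ₗ[K] B') (π' : B' →ₗ[K] C'),
        (∀ n : ℕ, ∀ a ∈ SA'.grading n, i' a ∈ SB'.grading n) →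
        (∀ n : ℕ, ∀ b ∈ SB'.grading n, π' b ∈ SC'.grading n) →
        IsHopfSES SA'.toHopfStr SB'.toHopfStr SC'.toHopfStr i' π' →
        ∀ (αA : A →ₗ[K] A') (αB : B →ₗ[K] B') (αC : C →ₗ[K] C'),
        IsHopfHom SA.toHopfStr SA'.toHopfStr αA →
        IsHopfHom SB.toHopfStr SB'.toHopfStr αB →
        IsHopfHom SC.toHopfStr SC'.toHopfStr αC →
        (∀ n : ℕ, ∀ a ∈ SA.grading n, αA a ∈ SA'.grading n) →
        (∀ n : ℕ, ∀ b ∈ SB.grading n, αB b ∈ SB'.grading n) →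
        (∀ n : ℕ, ∀ c ∈ SC.grading n, αC c ∈ SC'.grading n) →
        αB.comp i = i'.comp αA → αC.comp π = π'.comp αB →
        ∀ (f : C →ₗ[K] B) (g : C' →ₗ[K] B'),
        (∀ n : ℕ, ∀ c ∈ SC.grading n, f c ∈ SB.grading n) → π.comp f = LinearMap.id →
        (∀ n : ℕ, ∀ c ∈ SC'.grading n, g c ∈ SB'.grading n) → π'.comp g = LinearMap.id →
        ∀ n : ℕ, ∀ a ∈ augPow SA.toHopfStr n, ∀ c : C,
          αB (SB.mul (i a) (f c)) - SB'.mul (i' (αA a)) (g (αC c))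
            ∈ augPowSmul SA'.toHopfStr SB'.toHopfStr i' (n+1)) :=
  stmt2_general K A B C SA SB SC hA hB i π hi hπ hses
end
end

section
/- For every 𝔽₂-vector space V, the sequence 𝔽₂ → Sym(V) →^ℱ Sym(V) → Λ(V) → 𝔽₂, where ℱ is the Frobenius homomorphism (v ↦ v² on generators) and Sym(V) → Λ(V) is the canonical projection, is a short exact sequence in the abelian category of bicommutative Hopf algebras over 𝔽₂. -/
open TensorProduct

noncomputable section

abbrev F2 := ZMod 2

/-- A commutative `K`-algebra structure on a `K`-module, given by linear data. -/
structure CommAlgStr (K : Type*) [Field K] (W : Type*) [AddCommGroup W] [Module K W] where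
  mul : W →ₗ[K] W →ₗ[K] W
  one : W
  mul_assoc' : ∀ x y z : W, mul (mul x y) z = mul x (mul y z)
  mul_comm' : ∀ x y : W, mul x y = mul y x
  one_mul' : ∀ x : W, mul one x = x

/-- The underlying commutative algebra of a Hopf structure. -/
def HopfStr.toCommAlgStr {K : Type*} [Field K] {X : Type*} [AddCommGroup X] [Module K X]
    (S : HopfStr K X) : CommAlgStr K X :=
  ⟨S.mul, S.one, S.mul_assoc', S.mul_comm', S.one_mul'⟩

/-- `g` is a homomorphism of algebras. -/
def IsAlgHomStr {K : Type*} [Field K] {X W : Type*} [AddCommGroup X] [Module K X]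
    [AddCommGroup W] [Module K W] (SX : CommAlgStr K X) (SW : CommAlgStr K W)
    (g : X →ₗ[K] W) : Prop :=
  (∀ x y : X, g (SX.mul x y) = SW.mul (g x) (g y)) ∧ g SX.one = SW.one

/-- `(S, ι)` is the symmetric algebra `Sym(V)` with its standard bicommutative Hopf
algebra structure (`V` primitive): it has the universal property of the free commutative
algebra on `V`, and the generators are primitive. -/
structure IsSymAlgebra {K : Type*} [Field K] {V X : Type*} [AddCommGroup V] [Module K V]
    [AddCommGroup X] [Module K X] (S : HopfStr K X) (ι : V →ₗ[K] X) : Prop where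
  univ : ∀ (W : Type) (_ : AddCommGroup W) (_ : Module K W) (SW : CommAlgStr K W)
      (φ : V →ₗ[K] W), ∃! g : X →ₗ[K] W, IsAlgHomStr S.toCommAlgStr SW g ∧ g.comp ι = φ
  comul_gen : ∀ v : V, S.comul (ι v) = ι v ⊗ₜ[K] S.one + S.one ⊗ₜ[K] ι v
  counit_gen : ∀ v : V, S.counit (ι v) = 0

/-- `(S, ι)` is the exterior algebra `Λ(V)` with its standard bicommutative Hopf algebra
structure (over `𝔽₂`; `V` primitive): it has the universal property of the free
commutative algebra on `V` with square-zero generators, and the generators are primitive. -/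
structure IsExtAlgebra {K : Type*} [Field K] {V X : Type*} [AddCommGroup V] [Module K V]
    [AddCommGroup X] [Module K X] (S : HopfStr K X) (ι : V →ₗ[K] X) : Prop where
  sq_zero : ∀ v : V, S.mul (ι v) (ι v) = 0
  univ : ∀ (W : Type) (_ : AddCommGroup W) (_ : Module K W) (SW : CommAlgStr K W)
      (φ : V →ₗ[K] W), (∀ v : V, SW.mul (φ v) (φ v) = 0) →
      ∃! g : X →ₗ[K] W, IsAlgHomStr S.toCommAlgStr SW g ∧ g.comp ι = φ
  comul_gen : ∀ v : V, S.comul (ι v) = ι v ⊗ₜ[K] S.one + S.one ⊗ₜ[K] ι v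
  counit_gen : ∀ v : V, S.counit (ι v) = 0

/-!
Choosing a basis of `V` identifies `Sym(V)` with a polynomial ring `𝔽₂[xᵢ]`. There the
Frobenius is `x ↦ x²`, which is injective, and the projection is the quotient by the squares
`xᵢ²`, so its kernel is the ideal generated by the Frobenius image of the augmentation ideal
`(xᵢ)`; the projection is onto because `Λ(V)` is generated by `V`.

For the Hopf kernel: `(id ⊗ pr) Δ (x²) = ((id ⊗ pr) Δ x)²`, and squaring kills the second
tensor factor because generators square to zero in `Λ(V)`, leaving `x² ⊗ 1`. Conversely, compose
`(id ⊗ pr) Δ` with the character `Λ(V) → 𝔽₂[ε]`, `v ↦ vᵢ ε`; its `ε`-coefficient is the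
derivation `∂/∂xᵢ`, which therefore vanishes on the Hopf kernel. A polynomial over `𝔽₂` all of
whose partial derivatives vanish has only even exponents, hence is a square.
-/

section Slant

variable {K A B C : Type*} [Field K]

section Module

variable [AddCommGroup A] [Module K A] [AddCommGroup B] [Module K B] [AddCommGroup C] [Module K C]

def slant (f : B →ₗ[K] K) : A ⊗[K] B →ₗ[K] A :=
  (TensorProduct.rid K A).toLinearMap ∘ₗ f.lTensor A

@[simp]
theorem slant_tmul (f : B →ₗ[K] K) (a : A) (b : B) : slant f (a ⊗ₜ[K] b) = f b • a := by
  simp [slant]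

theorem slant_map_id (f : C →ₗ[K] K) (g : B →ₗ[K] C) (u : A ⊗[K] B) :
    slant f (TensorProduct.map LinearMap.id g u) = slant (f ∘ₗ g) u := by
  simp [slant]
  rfl

end Module

variable [CommRing A] [Algebra K A] [CommRing B] [Algebra K B] [CommRing C] [Algebra K C]

theorem slant_mul (ε : B →ₐ[K] K) (δ : B →ₗ[K] K)
    (hδ : ∀ b c, δ (b * c) = ε b * δ c + δ b * ε c) (u w : A ⊗[K] B) :
    slant δ (u * w) = slant ε.toLinearMap u * slant δ w + slant δ u * slant ε.toLinearMap w := by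
  induction u using TensorProduct.induction_on with
  | zero => simp
  | add u u' hu hu' => simp only [add_mul, map_add, hu, hu']; ring
  | tmul a b =>
    induction w using TensorProduct.induction_on with
    | zero => simp
    | add w w' hw hw' => simp only [mul_add, map_add, hw, hw']; ring
    | tmul c d => simp [hδ, add_smul, smul_smul, mul_comm]

def slantDerivation (e : A ≃ₐ[K] C) (Φ : A →ₐ[K] C ⊗[K] B) (ε : B →ₐ[K] K) (δ : B →ₗ[K] K)
    (hδ : ∀ b c, δ (b * c) = ε b * δ c + δ b * ε c) (hΦ : ∀ a, slant ε.toLinearMap (Φ a) = e a) :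
    Derivation K A A :=
  Derivation.mk' (e.symm.toLinearMap ∘ₗ slant δ ∘ₗ Φ.toLinearMap) fun a b => by
    simp only [LinearMap.comp_apply, AlgHom.toLinearMap_apply, map_mul, slant_mul ε δ hδ, hΦ,
      AlgEquiv.toLinearMap_apply, map_add, AlgEquiv.symm_apply_apply, smul_eq_mul]
    ring

end Slant

namespace MvPolynomial

variable {σ R : Type*} [CommSemiring R]

theorem exists_expand_eq_of_dvd (p : ℕ) (f : MvPolynomial σ R)
    (h : ∀ d ∈ f.support, ∀ i, p ∣ d i) : ∃ g, expand p g = f := by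
  classical
  refine ⟨∑ d ∈ f.support, monomial (Finsupp.mapRange (· / p) (Nat.zero_div p) d) (coeff d f), ?_⟩
  rw [map_sum]
  conv_rhs => rw [← support_sum_monomial_coeff f]
  refine Finset.sum_congr rfl fun d hd => ?_
  rw [expand_monomial, show p • Finsupp.mapRange (· / p) (Nat.zero_div p) d = d from
    Finsupp.ext fun i => by simp [Nat.mul_div_cancel' (h d hd i)]]

theorem dvd_of_mem_support_of_pderiv_eq_zero {p : ℕ} [Fact p.Prime]
    {f : MvPolynomial σ (ZMod p)} (h : ∀ i, pderiv i f = 0) {d : σ →₀ ℕ} (hd : d ∈ f.support)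
    (i : σ) : p ∣ d i := by
  by_contra hdi
  have hle : Finsupp.single i 1 ≤ d :=
    Finsupp.single_le_iff.2 (Nat.one_le_iff_ne_zero.2 fun h0 => hdi (h0 ▸ dvd_zero p))
  have hsucc : (d - Finsupp.single i 1 : σ →₀ ℕ) i + 1 = d i := by
    rw [Finsupp.tsub_apply, Finsupp.single_eq_same]
    exact Nat.sub_add_cancel (Finsupp.single_le_iff.1 hle)
  have hcoeff := coeff_pderiv (i := i) f (d - Finsupp.single i 1)
  rw [h i, coeff_zero, tsub_add_cancel_of_le hle, ← Nat.cast_add_one, hsucc] at hcoeff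
  rcases mul_eq_zero.1 hcoeff.symm with hf | hp
  · exact mem_support_iff.1 hd hf
  · exact hdi ((ZMod.natCast_eq_zero_iff _ _).1 hp)

theorem exists_pow_eq_of_pderiv_eq_zero {p : ℕ} [Fact p.Prime] (f : MvPolynomial σ (ZMod p))
    (h : ∀ i, pderiv i f = 0) : ∃ g, g ^ p = f := by
  obtain ⟨g, hg⟩ :=
    exists_expand_eq_of_dvd p f fun d hd => dvd_of_mem_support_of_pderiv_eq_zero h hd
  exact ⟨g, (expand_zmod g).symm.trans hg⟩

end MvPolynomial

theorem FiniteField.frobeniusAlgHom_zmod_apply {p : ℕ} [Fact p.Prime] {R : Type*} [CommRing R]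
    [Algebra (ZMod p) R] (x : R) : FiniteField.frobeniusAlgHom (ZMod p) R x = x ^ p := by
  rw [FiniteField.frobeniusAlgHom_apply, ZMod.card]

theorem Ideal.restrictScalars_map_eq_span {K R S : Type*} [CommSemiring K] [CommSemiring R]
    [CommSemiring S] [Algebra K R] [Algebra K S] (f : R →ₐ[K] S) (I : Ideal R) :
    (I.map f).restrictScalars K = Submodule.span K {y | ∃ a ∈ I, ∃ b, y = f a * b} := by
  set T := Submodule.span K {y | ∃ a ∈ I, ∃ b, y = f a * b}
  have hT : ∀ c, ∀ y ∈ T, c * y ∈ T := fun c y hy => by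
    induction hy using Submodule.span_induction with
    | mem y hy =>
      obtain ⟨a, ha, b, rfl⟩ := hy
      exact Submodule.subset_span ⟨a, ha, c * b, by ring⟩
    | zero => simp
    | add y z _ _ hy hz => rw [mul_add]; exact T.add_mem hy hz
    | smul r y _ hy => rw [mul_smul_comm]; exact T.smul_mem r hy
  refine le_antisymm (fun y hy => ?_) (Submodule.span_le.2 ?_)
  · rw [Submodule.restrictScalars_mem] at hy
    induction hy using Submodule.span_induction with
    | mem y hy =>
      obtain ⟨a, ha, rfl⟩ := hy
      exact Submodule.subset_span ⟨a, ha, 1, (mul_one _).symm⟩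
    | zero => exact T.zero_mem
    | add y z _ _ hy hz => exact T.add_mem hy hz
    | smul c y _ hy => exact hT c y hy
  · rintro _ ⟨a, ha, b, rfl⟩
    exact Ideal.mul_mem_right b _ (Ideal.mem_map_of_mem f ha)

theorem AlgHom.ker_le_of_comp_eq_mkₐ {K R W : Type*} [CommRing K] [CommRing R] [Algebra K R]
    [Semiring W] [Algebra K W] {I : Ideal R} (f : R →ₐ[K] W) (g : W →ₐ[K] R ⧸ I)
    (h : g.comp f = Ideal.Quotient.mkₐ K I) : RingHom.ker f ≤ I := fun x hx => by
  rw [← Ideal.Quotient.eq_zero_iff_mem, ← Ideal.Quotient.mkₐ_eq_mk K, ← h, AlgHom.comp_apply,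
    RingHom.mem_ker.1 hx, map_zero]

/- The structures above carry their multiplication as data. A hypothesis
`S.toCommAlgStr = .ofAlgebra K X` says that it is the multiplication of the ambient `CommRing`
instance; in the main theorem that instance is `S.toCommAlgStr.toCommRing`. -/

namespace CommAlgStr

def ofAlgebra (K W : Type*) [Field K] [CommRing W] [Algebra K W] : CommAlgStr K W :=
  ⟨LinearMap.mul K W, 1, mul_assoc, mul_comm, one_mul⟩

variable {K : Type*} [Field K] {W : Type*} [AddCommGroup W] [Module K W] (A : CommAlgStr K W)

abbrev toCommRing : CommRing W :=
  { (inferInstance : AddCommGroup W) with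
    mul := fun x y => A.mul x y
    one := A.one
    mul_assoc := A.mul_assoc'
    mul_comm := A.mul_comm'
    one_mul := A.one_mul'
    mul_one := fun x => (A.mul_comm' x A.one).trans (A.one_mul' x)
    left_distrib := fun x y z => map_add (A.mul x) y z
    right_distrib := fun x y z => LinearMap.map_add₂ A.mul x y z
    zero_mul := fun x => LinearMap.map_zero₂ A.mul x
    mul_zero := fun x => map_zero (A.mul x) }

abbrev toAlgebra : letI := A.toCommRing; Algebra K W :=
  letI := A.toCommRing
  Algebra.ofModule (fun r x y => LinearMap.map_smul₂ A.mul r x y)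
    (fun r x y => map_smul (A.mul x) r y)

theorem ofAlgebra_toAlgebra : letI := A.toCommRing; letI := A.toAlgebra; ofAlgebra K W = A :=
  rfl

end CommAlgStr

namespace HopfStr

theorem slant_counit_comul {K X : Type*} [Field K] [AddCommGroup X] [Module K X]
    (S : HopfStr K X) (x : X) : slant S.counit (S.comul x) = x := by
  have h : slant S.counit ∘ₗ (TensorProduct.comm K X X).toLinearMap =
      (TensorProduct.lid K X).toLinearMap ∘ₗ TensorProduct.map S.counit LinearMap.id :=
    TensorProduct.ext' fun a b => by simp
  have hc : TensorProduct.comm K X X (S.comul x) = S.comul x := LinearMap.congr_fun S.cocomm x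
  calc slant S.counit (S.comul x)
      = slant S.counit (TensorProduct.comm K X X (S.comul x)) := by rw [hc]
    _ = TensorProduct.lid K X (TensorProduct.map S.counit LinearMap.id (S.comul x)) :=
        LinearMap.congr_fun h (S.comul x)
    _ = x := LinearMap.congr_fun S.counit_comul x

variable {K : Type*} [Field K] {X : Type*} [CommRing X] [Algebra K X] (S : HopfStr K X)

theorem mul_eq (hA : S.toCommAlgStr = .ofAlgebra K X) (x y : X) : S.mul x y = x * y :=
  LinearMap.congr_fun₂ (congrArg CommAlgStr.mul hA) x y

theorem one_eq (hA : S.toCommAlgStr = .ofAlgebra K X) : S.one = 1 :=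
  congrArg CommAlgStr.one hA

def counitAlgHom (hA : S.toCommAlgStr = .ofAlgebra K X) : X →ₐ[K] K :=
  AlgHom.ofLinearMap S.counit (by rw [← S.one_eq hA, S.counit_one]) fun x y => by
    rw [← S.mul_eq hA, S.counit_mul]

theorem map₂_mul_mul (hA : S.toCommAlgStr = .ofAlgebra K X) (u w : X ⊗[K] X) :
    TensorProduct.map₂ S.mul S.mul u w = u * w := by
  rw [show S.mul = LinearMap.mul K X from congrArg CommAlgStr.mul hA]
  induction u using TensorProduct.induction_on with
  | zero => simp
  | add u u' hu hu' => rw [map_add, LinearMap.add_apply, hu, hu', add_mul]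
  | tmul a b =>
    induction w using TensorProduct.induction_on with
    | zero => simp
    | add w w' hw hw' => rw [map_add, hw, hw', mul_add]
    | tmul c d => simp

def comulAlgHom (hA : S.toCommAlgStr = .ofAlgebra K X) : X →ₐ[K] X ⊗[K] X :=
  AlgHom.ofLinearMap S.comul (by rw [Algebra.TensorProduct.one_def, ← S.one_eq hA, S.comul_one])
    fun x y => by rw [← S.mul_eq hA, S.comul_mul, ← S.map₂_mul_mul hA]; rfl

end HopfStr

def IsHopfHom.toAlgHom {K : Type*} [Field K] {X Y : Type*} [CommRing X] [Algebra K X]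
    [CommRing Y] [Algebra K Y] {SX : HopfStr K X} {SY : HopfStr K Y} {f : X →ₗ[K] Y}
    (hf : IsHopfHom SX SY f) (hX : SX.toCommAlgStr = .ofAlgebra K X)
    (hY : SY.toCommAlgStr = .ofAlgebra K Y) : X →ₐ[K] Y :=
  AlgHom.ofLinearMap f (by rw [← SX.one_eq hX, hf.map_one, SY.one_eq hY]) fun x y => by
    rw [← SX.mul_eq hX, hf.map_mul, SY.mul_eq hY]

theorem existsUnique_algHom_of_isAlgHomStr {K : Type*} [Field K] {X W : Type*} [CommRing X]
    [Algebra K X] [CommRing W] [Algebra K W] {P : (X →ₗ[K] W) → Prop}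
    (h : ∃! g : X →ₗ[K] W, IsAlgHomStr (.ofAlgebra K X) (.ofAlgebra K W) g ∧ P g) :
    ∃! f : X →ₐ[K] W, P f.toLinearMap := by
  obtain ⟨g, ⟨hg, hP⟩, hu⟩ := h
  exact ⟨AlgHom.ofLinearMap g hg.2 hg.1, hP, fun f hf =>
    AlgHom.toLinearMap_injective (hu _ ⟨⟨map_mul f, map_one f⟩, hf⟩)⟩

namespace IsExtAlgebra

variable {K V X L W : Type} [Field K] [AddCommGroup V] [Module K V] [CommRing L] [Algebra K L]
  [CommRing W] [Algebra K W] {SL : HopfStr K L} {ιL : V →ₗ[K] L}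

theorem existsUnique_algHom (hL : IsExtAlgebra SL ιL) (hA : SL.toCommAlgStr = .ofAlgebra K L)
    (φ : V →ₗ[K] W) (hφ : ∀ v, φ v * φ v = 0) : ∃! f : L →ₐ[K] W, f.toLinearMap ∘ₗ ιL = φ := by
  have h := hL.univ W inferInstance inferInstance (.ofAlgebra K W) φ hφ
  rw [hA] at h
  exact existsUnique_algHom_of_isAlgHomStr h

def lift (hL : IsExtAlgebra SL ιL) (hA : SL.toCommAlgStr = .ofAlgebra K L) (φ : V →ₗ[K] W)
    (hφ : ∀ v, φ v * φ v = 0) : L →ₐ[K] W :=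
  (hL.existsUnique_algHom hA φ hφ).exists.choose

theorem lift_ι (hL : IsExtAlgebra SL ιL) (hA : SL.toCommAlgStr = .ofAlgebra K L) (φ : V →ₗ[K] W)
    (hφ : ∀ v, φ v * φ v = 0) (v : V) : hL.lift hA φ hφ (ιL v) = φ v :=
  LinearMap.congr_fun (hL.existsUnique_algHom hA φ hφ).exists.choose_spec v

theorem algHom_ext (hL : IsExtAlgebra SL ιL) (hA : SL.toCommAlgStr = .ofAlgebra K L)
    {f g : L →ₐ[K] W} (h : ∀ v, f (ιL v) = g (ιL v)) : f = g := by
  have hsq : ∀ v, g (ιL v) * g (ιL v) = 0 := fun v => by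
    rw [← map_mul, ← SL.mul_eq hA, hL.sq_zero, map_zero]
  exact (hL.existsUnique_algHom hA (g.toLinearMap ∘ₗ ιL) hsq).unique (LinearMap.ext h) rfl

theorem adjoin_range_eq_top (hL : IsExtAlgebra SL ιL) (hA : SL.toCommAlgStr = .ofAlgebra K L) :
    Algebra.adjoin K (Set.range ιL) = ⊤ := by
  set A := Algebra.adjoin K (Set.range ιL)
  let φ : V →ₗ[K] A := ιL.codRestrict A.toSubmodule fun v => Algebra.subset_adjoin ⟨v, rfl⟩
  have hφ : ∀ v, φ v * φ v = 0 := fun v => Subtype.ext <| by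
    rw [MulMemClass.coe_mul, ZeroMemClass.coe_zero, ← SL.mul_eq hA]
    exact hL.sq_zero v
  have h : A.val.comp (hL.lift hA φ hφ) = AlgHom.id K L :=
    hL.algHom_ext hA fun v => congrArg Subtype.val (hL.lift_ι hA φ hφ v)
  refine eq_top_iff.2 fun x _ => ?_
  rw [← AlgHom.id_apply (R := K) x, ← h]
  exact (hL.lift hA φ hφ x).2

theorem surjective_of_ι_mem_range (hL : IsExtAlgebra SL ιL)
    (hA : SL.toCommAlgStr = .ofAlgebra K L) [CommRing X] [Algebra K X] (f : X →ₐ[K] L)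
    (hf : ∀ v, ιL v ∈ f.range) : Function.Surjective f := by
  rw [← AlgHom.range_eq_top, eq_top_iff, ← hL.adjoin_range_eq_top hA]
  exact Algebra.adjoin_le (Set.range_subset_iff.2 hf)

end IsExtAlgebra

namespace IsSymAlgebra

variable {K V X L W : Type} [Field K] [AddCommGroup V] [Module K V] [CommRing X] [Algebra K X]
  [CommRing W] [Algebra K W] {S : HopfStr K X} {ι : V →ₗ[K] X}

theorem existsUnique_algHom (hS : IsSymAlgebra S ι) (hA : S.toCommAlgStr = .ofAlgebra K X)
    (φ : V →ₗ[K] W) : ∃! f : X →ₐ[K] W, f.toLinearMap ∘ₗ ι = φ := by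
  have h := hS.univ W inferInstance inferInstance (.ofAlgebra K W) φ
  rw [hA] at h
  exact existsUnique_algHom_of_isAlgHomStr h

def lift (hS : IsSymAlgebra S ι) (hA : S.toCommAlgStr = .ofAlgebra K X) (φ : V →ₗ[K] W) :
    X →ₐ[K] W :=
  (hS.existsUnique_algHom hA φ).exists.choose

theorem lift_ι (hS : IsSymAlgebra S ι) (hA : S.toCommAlgStr = .ofAlgebra K X) (φ : V →ₗ[K] W)
    (v : V) : hS.lift hA φ (ι v) = φ v :=
  LinearMap.congr_fun (hS.existsUnique_algHom hA φ).exists.choose_spec v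

theorem algHom_ext (hS : IsSymAlgebra S ι) (hA : S.toCommAlgStr = .ofAlgebra K X)
    {f g : X →ₐ[K] W} (h : ∀ v, f (ι v) = g (ι v)) : f = g :=
  (hS.existsUnique_algHom hA (g.toLinearMap ∘ₗ ι)).unique (LinearMap.ext h) rfl

def mvPolynomialEquiv (hS : IsSymAlgebra S ι) (hA : S.toCommAlgStr = .ofAlgebra K X) {B : Type}
    (b : Module.Basis B K V) : MvPolynomial B K ≃ₐ[K] X :=
  AlgEquiv.ofAlgHom (MvPolynomial.aeval (ι ∘ b)) (hS.lift hA (b.constr K MvPolynomial.X))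
    (hS.algHom_ext hA fun v => by
      rw [AlgHom.comp_apply, hS.lift_ι]
      exact LinearMap.congr_fun (b.ext (f₁ := (MvPolynomial.aeval (ι ∘ b)).toLinearMap ∘ₗ
        b.constr K MvPolynomial.X) (f₂ := ι) fun i => by simp) v)
    (MvPolynomial.algHom_ext fun i => by simp [hS.lift_ι])

@[simp]
theorem mvPolynomialEquiv_X (hS : IsSymAlgebra S ι) (hA : S.toCommAlgStr = .ofAlgebra K X)
    {B : Type} (b : Module.Basis B K V) (i : B) :
    hS.mvPolynomialEquiv hA b (MvPolynomial.X i) = ι (b i) :=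
  MvPolynomial.aeval_X _ i

theorem ker_counitAlgHom (hS : IsSymAlgebra S ι) (hA : S.toCommAlgStr = .ofAlgebra K X) :
    RingHom.ker (S.counitAlgHom hA) = Ideal.span (Set.range ι) := by
  refine le_antisymm (AlgHom.ker_le_of_comp_eq_mkₐ _ (Algebra.ofId K _) ?_) (Ideal.span_le.2 ?_)
  · refine hS.algHom_ext hA fun v => ?_
    have hv : S.counitAlgHom hA (ι v) = 0 := hS.counit_gen v
    rw [AlgHom.comp_apply, hv, map_zero, Ideal.Quotient.mkₐ_eq_mk,
      Ideal.Quotient.eq_zero_iff_mem.2 (Ideal.subset_span (Set.mem_range_self v))]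
  · rintro _ ⟨v, rfl⟩
    exact hS.counit_gen v

variable [CommRing L] [Algebra K L] {SL : HopfStr K L} {ιL : V →ₗ[K] L}

theorem ker_eq_span_mul_self (hS : IsSymAlgebra S ι) (hA : S.toCommAlgStr = .ofAlgebra K X)
    (hL : IsExtAlgebra SL ιL) (hLA : SL.toCommAlgStr = .ofAlgebra K L) (pr : X →ₐ[K] L)
    (hpr : ∀ v, pr (ι v) = ιL v) :
    RingHom.ker pr = Ideal.span (Set.range fun v => ι v * ι v) := by
  set J := Ideal.span (Set.range fun v => ι v * ι v)
  let φ := (Ideal.Quotient.mkₐ K J).toLinearMap ∘ₗ ι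
  have hφ : ∀ v, φ v * φ v = 0 := fun v => by
    rw [LinearMap.comp_apply, AlgHom.toLinearMap_apply, ← map_mul, Ideal.Quotient.mkₐ_eq_mk,
      Ideal.Quotient.eq_zero_iff_mem]
    exact Ideal.subset_span ⟨v, rfl⟩
  refine le_antisymm (AlgHom.ker_le_of_comp_eq_mkₐ pr (hL.lift hLA φ hφ) ?_) (Ideal.span_le.2 ?_)
  · exact hS.algHom_ext hA fun v => by rw [AlgHom.comp_apply, hpr, hL.lift_ι]; rfl
  · rintro _ ⟨v, rfl⟩
    rw [SetLike.mem_coe, RingHom.mem_ker, map_mul, hpr, ← SL.mul_eq hLA, hL.sq_zero]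

theorem ker_eq_map_ker_counitAlgHom (hS : IsSymAlgebra S ι)
    (hA : S.toCommAlgStr = .ofAlgebra K X) (hL : IsExtAlgebra SL ιL)
    (hLA : SL.toCommAlgStr = .ofAlgebra K L) (pr : X →ₐ[K] L) (hpr : ∀ v, pr (ι v) = ιL v)
    (F : X →ₐ[K] X) (hF : ∀ v, F (ι v) = ι v * ι v) :
    RingHom.ker pr = Ideal.map F (RingHom.ker (S.counitAlgHom hA)) := by
  rw [hS.ker_eq_span_mul_self hA hL hLA pr hpr, hS.ker_counitAlgHom hA, Ideal.map_span,
    ← Set.range_comp]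
  simp only [Function.comp_def, hF]

end IsSymAlgebra

theorem IsSymAlgebra.pow_char_injective {p : ℕ} [Fact p.Prime] {V X : Type} [AddCommGroup V]
    [Module (ZMod p) V] [CommRing X] [Algebra (ZMod p) X] {S : HopfStr (ZMod p) X}
    {ι : V →ₗ[ZMod p] X} (hS : IsSymAlgebra S ι) (hA : S.toCommAlgStr = .ofAlgebra (ZMod p) X) :
    Function.Injective fun x : X => x ^ p := by
  let e := hS.mvPolynomialEquiv hA (Module.Basis.ofVectorSpace (ZMod p) V)
  intro x y hxy
  have h : frobenius _ p (e.symm x) = frobenius _ p (e.symm y) := by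
    simp only [frobenius_def, ← map_pow]
    exact congrArg e.symm hxy
  simpa using congrArg e (frobenius_inj _ p h)

namespace IsSymAlgebra

variable {V X L : Type} [AddCommGroup V] [Module F2 V] [CommRing X] [Algebra F2 X] [CommRing L]
  [Algebra F2 L] {S : HopfStr F2 X} {ι : V →ₗ[F2] X} {SL : HopfStr F2 L} {ιL : V →ₗ[F2] L}

theorem comul_sq (hS : IsSymAlgebra S ι) (hA : S.toCommAlgStr = .ofAlgebra F2 X)
    (hL : IsExtAlgebra SL ιL) (hLA : SL.toCommAlgStr = .ofAlgebra F2 L) (pr : X →ₐ[F2] L)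
    (hpr : ∀ v, pr (ι v) = ιL v) (x : X) :
    TensorProduct.map LinearMap.id pr.toLinearMap (S.comul (x ^ 2)) = (x ^ 2) ⊗ₜ[F2] (1 : L) := by
  let Φ := (Algebra.TensorProduct.map (AlgHom.id F2 X) pr).comp (S.comulAlgHom hA)
  have hΦ : ∀ v, Φ (ι v) = ι v ⊗ₜ[F2] 1 + 1 ⊗ₜ[F2] ιL v := fun v => by
    simp [Φ, HopfStr.comulAlgHom, hS.comul_gen, S.one_eq hA, hpr]
  have h : (FiniteField.frobeniusAlgHom F2 (X ⊗[F2] L)).comp Φ =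
      Algebra.TensorProduct.includeLeft.comp (FiniteField.frobeniusAlgHom F2 X) :=
    hS.algHom_ext hA fun v => by
      have hsq : ιL v ^ 2 = 0 := by rw [sq, ← SL.mul_eq hLA, hL.sq_zero]
      rw [AlgHom.comp_apply, hΦ, map_add]
      simp [Algebra.TensorProduct.tmul_pow, hsq]
  have hx := congrArg (· x) h
  simp only [AlgHom.comp_apply, FiniteField.frobeniusAlgHom_zmod_apply, ← map_pow] at hx
  exact hx

theorem pderiv_mvPolynomialEquiv_symm_eq_zero (hS : IsSymAlgebra S ι)
    (hA : S.toCommAlgStr = .ofAlgebra F2 X) (hL : IsExtAlgebra SL ιL)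
    (hLA : SL.toCommAlgStr = .ofAlgebra F2 L) (pr : X →ₐ[F2] L) (hpr : ∀ v, pr (ι v) = ιL v)
    {B : Type} (b : Module.Basis B F2 V) {x : X}
    (hx : TensorProduct.map LinearMap.id pr.toLinearMap (S.comul x) = x ⊗ₜ[F2] 1) (i : B) :
    MvPolynomial.pderiv i ((hS.mvPolynomialEquiv hA b).symm x) = 0 := by
  set e := hS.mvPolynomialEquiv hA b
  let χ : L →ₐ[F2] DualNumber F2 := hL.lift hLA (TrivSqZeroExt.inrHom F2 F2 ∘ₗ b.coord i)
    fun v => TrivSqZeroExt.inr_mul_inr _ _ _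
  have hχ : ∀ v, χ (ιL v) = TrivSqZeroExt.inr (b.coord i v) := hL.lift_ι hLA _ _
  let ε := (TrivSqZeroExt.fstHom F2 F2 F2).comp χ
  let δ := TrivSqZeroExt.sndHom F2 F2 ∘ₗ χ.toLinearMap
  have hδ : ∀ a c, δ (a * c) = ε a * δ c + δ a * ε c := fun a c => by
    simp [ε, δ, TrivSqZeroExt.snd_mul, mul_comm]
  have hε : ε.toLinearMap ∘ₗ pr.toLinearMap = S.counit :=
    congrArg AlgHom.toLinearMap (hS.algHom_ext hA (f := ε.comp pr) (g := S.counitAlgHom hA)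
      fun v => by simp [ε, hpr, hχ, HopfStr.counitAlgHom, hS.counit_gen v])
  let Φ := ((Algebra.TensorProduct.map (AlgHom.id F2 X) pr).comp (S.comulAlgHom hA)).comp
    e.toAlgHom
  have hΦ : ∀ p, slant ε.toLinearMap (Φ p) = e p := fun p => by
    change slant ε.toLinearMap (TensorProduct.map LinearMap.id pr.toLinearMap (S.comul (e p))) = _
    rw [slant_map_id, hε, S.slant_counit_comul]
  have hD : slantDerivation e Φ ε δ hδ hΦ = MvPolynomial.pderiv i :=
    MvPolynomial.derivation_ext fun j => by
      classical
      change e.symm (slant δ (TensorProduct.map LinearMap.id pr.toLinearMap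
        (S.comul (e (MvPolynomial.X j))))) = _
      simp [e, hS.comul_gen, S.one_eq hA, hpr, δ, hχ, MvPolynomial.pderiv_X,
        Finsupp.single_apply, Pi.single_apply, eq_comm]
      split_ifs <;> simp
  rw [← hD]
  change e.symm (slant δ (TensorProduct.map LinearMap.id pr.toLinearMap
    (S.comul (e (e.symm x))))) = 0
  simp [hx, δ]

theorem exists_sq_eq_of_comul_eq (hS : IsSymAlgebra S ι) (hA : S.toCommAlgStr = .ofAlgebra F2 X)
    (hL : IsExtAlgebra SL ιL) (hLA : SL.toCommAlgStr = .ofAlgebra F2 L) (pr : X →ₐ[F2] L)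
    (hpr : ∀ v, pr (ι v) = ιL v) {x : X}
    (hx : TensorProduct.map LinearMap.id pr.toLinearMap (S.comul x) = x ⊗ₜ[F2] 1) :
    ∃ y, y ^ 2 = x := by
  let e := hS.mvPolynomialEquiv hA (Module.Basis.ofVectorSpace F2 V)
  obtain ⟨g, hg⟩ := MvPolynomial.exists_pow_eq_of_pderiv_eq_zero _
    (hS.pderiv_mvPolynomialEquiv_symm_eq_zero hA hL hLA pr hpr _ hx)
  exact ⟨e g, by rw [← map_pow, hg, e.apply_symm_apply]⟩

end IsSymAlgebra

theorem stmt19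
    (V X L : Type)
    [AddCommGroup V] [Module F2 V] [AddCommGroup X] [Module F2 X] [AddCommGroup L] [Module F2 L]
    (S : HopfStr F2 X) (ι : V →ₗ[F2] X) (hS : IsSymAlgebra S ι)
    (SL : HopfStr F2 L) (ιL : V →ₗ[F2] L) (hL : IsExtAlgebra SL ιL)
    -- the Frobenius homomorphism of Hopf algebras, v ↦ v² on generators
    (F : X →ₗ[F2] X) (hF : IsHopfHom S S F)
    (hFgen : ∀ v : V, F (ι v) = S.mul (ι v) (ι v))
    -- the canonical projection Sym(V) → Λ(V), identity on generators
    (pr : X →ₗ[F2] L) (hpr : IsHopfHom S SL pr)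
    (hprgen : ∀ v : V, pr (ι v) = ιL v) :
    IsHopfSES S S SL F pr := by
  let := S.toCommAlgStr.toCommRing
  let := S.toCommAlgStr.toAlgebra
  let := SL.toCommAlgStr.toCommRing
  let := SL.toCommAlgStr.toAlgebra
  have hA : S.toCommAlgStr = .ofAlgebra F2 X := S.toCommAlgStr.ofAlgebra_toAlgebra.symm
  have hLA : SL.toCommAlgStr = .ofAlgebra F2 L := SL.toCommAlgStr.ofAlgebra_toAlgebra.symm
  let prAlg := hpr.toAlgHom hA hLA
  have hFsq : ∀ x, F x = x ^ 2 := fun x => congrArg (· x)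
    (hS.algHom_ext hA (f := hF.toAlgHom hA hA) (g := FiniteField.frobeniusAlgHom F2 X) fun v => by
      rw [FiniteField.frobeniusAlgHom_zmod_apply, sq]; exact hFgen v)
  refine ⟨hF, hpr, fun x y hxy => ?_, ?_, ?_, ?_⟩
  · exact hS.pow_char_injective hA (by simpa only [hFsq] using hxy)
  · exact hL.surjective_of_ι_mem_range hLA prAlg fun v => ⟨ι v, hprgen v⟩
  · ext x
    rw [LinearMap.mem_ker, LinearMap.sub_apply, sub_eq_zero, SL.one_eq hLA]
    constructor
    · rintro ⟨y, rfl⟩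
      rw [hFsq]
      exact hS.comul_sq hA hL hLA prAlg hprgen y
    · intro hx
      obtain ⟨y, rfl⟩ := hS.exists_sq_eq_of_comul_eq hA hL hLA prAlg hprgen hx
      exact ⟨y, hFsq y⟩
  · have h := hS.ker_eq_map_ker_counitAlgHom hA hL hLA prAlg hprgen
      (hF.toAlgHom hA hA) hFgen
    exact (congrArg (Submodule.restrictScalars F2) h).trans (Ideal.restrictScalars_map_eq_span _ _)
end
end
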